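/- arXiv:2202.06660 — 13 statements merged into one kernel-verified Lean document; each statement's English description precedes it below -/
import Mathlib

section
/- A social choice function f is BNOM-implementable if and only if for each agent i there exists a best-case labelling β such that the graph G^β_{i,f} contains no negative-weight cycles. -/
/-- A cycle of length `n` in a directed, annotated multigraph with edge relation `E`:
the node sequence is `c k`, and there is an edge annotated `(c k).2`
from `(c k).1` to `(c (k+1 mod n)).1` for every `k`. -/
def IsCycle {P T : Type*} {n : ℕ} (E : P → P → T → Prop) (c : Fin n → P × T) : Prop :=
  ∀ k : Fin n, E (c k).1 (c (finRotate n k)).1 (c k).2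

/-- The total weight of a cycle, where the edge from `x` to `y` annotated `t`
has weight `w x y t`. -/
def cycleWeight {P T : Type*} {n : ℕ} (w : P → P → T → ℝ) (c : Fin n → P × T) : ℝ :=
  ∑ k : Fin n, w (c k).1 (c (finRotate n k)).1 (c k).2

/-- The graph has a negative-weight cycle (of some positive length). -/
def HasNegCycle {P T : Type*} (E : P → P → T → Prop) (w : P → P → T → ℝ) : Prop :=
  ∃ (n : ℕ) (c : Fin (n + 1) → P × T), IsCycle E c ∧ cycleWeight w c < 0

/-- Edges of the graph `G^β_{i,f}` for a best-case labelling `β` of agent `i`.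
The labelling entry `β t k` (true type `t`, bid `k`) is recorded as a full profile
whose `i`-th coordinate is irrelevant (it is overwritten by the bid `k`).
An edge from `x` to `y` annotated `t` is either a labelling edge,
from `(k, β_{t k})` to any node `(k, x₋ᵢ)`, or an incentive-compatibility edge,
from `(t, β_{t t})` to `(k, β_{t k})`. -/
def edgeB {I : Type*} [DecidableEq I] {T : I → Type*} (i : I)
    (β : T i → T i → (∀ j, T j)) (x y : ∀ j, T j) (t : T i) : Prop :=
  (∃ k : T i, x = Function.update (β t k) i k ∧ y i = k) ∨
  (∃ k : T i, x = Function.update (β t t) i t ∧ y = Function.update (β t k) i k)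



namespace BNOMAux
set_option linter.unusedSectionVars false

variable {V T : Type*}

inductive AWalk (E : V → V → T → Prop) : V → V → Type _
  | nil (v : V) : AWalk E v v
  | cons {u v x : V} (t : T) (h : E u v t) (p : AWalk E v x) : AWalk E u x

namespace AWalk

variable {E : V → V → T → Prop} (w : V → V → T → ℝ)

def length : {u v : V} → AWalk E u v → ℕ
  | _, _, .nil _ => 0
  | _, _, .cons _ _ p => p.length + 1

def weight : {u v : V} → AWalk E u v → ℝ
  | _, _, .nil _ => 0
  | _, _, @AWalk.cons _ _ _ u v _ t _ p => w u v t + p.weight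

def vertexAt : {u v : V} → AWalk E u v → ℕ → V
  | _, _, .nil x, _ => x
  | u, _, .cons _ _ _, 0 => u
  | _, _, .cons _ _ p, n+1 => p.vertexAt n

def annAt [Inhabited T] : {u v : V} → AWalk E u v → ℕ → T
  | _, _, .nil _, _ => default
  | _, _, .cons t _ _, 0 => t
  | _, _, .cons _ _ p, n+1 => p.annAt n

@[simp] theorem vertexAt_zero : ∀ {u v : V} (p : AWalk E u v), p.vertexAt 0 = u
  | _, _, .nil _ => rfl
  | _, _, .cons _ _ _ => rfl

theorem vertexAt_length : ∀ {u v : V} (p : AWalk E u v), p.vertexAt p.length = v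
  | _, _, .nil _ => rfl
  | _, _, .cons _ _ p => vertexAt_length p

variable [Inhabited T]

theorem edge_spec : ∀ {u v : V} (p : AWalk E u v) (k : ℕ), k < p.length →
    E (p.vertexAt k) (p.vertexAt (k+1)) (p.annAt k)
  | _, _, .cons t h p, 0, _ => by simpa [vertexAt, annAt] using h
  | _, _, .cons t h p, k+1, hk => by
      simpa [vertexAt, annAt] using edge_spec p k (by
        simpa [length] using Nat.lt_of_succ_lt_succ hk)

theorem weight_eq : ∀ {u v : V} (p : AWalk E u v),
    p.weight w = ∑ k ∈ Finset.range p.length,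
      w (p.vertexAt k) (p.vertexAt (k+1)) (p.annAt k)
  | _, _, .nil _ => by simp [weight, length]
  | _, _, .cons t h p => by
      rw [show (AWalk.cons t h p).length = p.length + 1 from rfl,
        Finset.sum_range_succ']
      have := weight_eq p
      simp only [weight, vertexAt, annAt, vertexAt_zero]
      rw [this, add_comm]





def append : {u v x : V} → AWalk E u v → AWalk E v x → AWalk E u x
  | _, _, _, .nil _, q => q
  | _, _, _, .cons t h p, q => .cons t h (p.append q)

@[simp] theorem length_append : ∀ {u v x : V} (p : AWalk E u v) (q : AWalk E v x),
    (p.append q).length = p.length + q.length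
  | _, _, _, .nil _, q => by simp [append, length]
  | _, _, _, .cons t h p, q => by
      simp [append, length, length_append p q]; omega

@[simp] theorem weight_append : ∀ {u v x : V} (p : AWalk E u v) (q : AWalk E v x),
    (p.append q).weight w = p.weight w + q.weight w
  | _, _, _, .nil _, q => by simp [append, weight]
  | _, _, _, .cons t h p, q => by
      simp [append, weight, weight_append p q]; ring

theorem splitAt {u v x : V} (p : AWalk E u v) (k : ℕ) (hk : k ≤ p.length)
    (hx : p.vertexAt k = x) :
    ∃ (q : AWalk E u x) (r : AWalk E x v),
      q.length = k ∧ r.length + k = p.length ∧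
      q.weight w + r.weight w = p.weight w ∧
      ∀ m, r.vertexAt m = p.vertexAt (k + m) := by
  induction k generalizing u p with
  | zero =>
    have : u = x := by rw [← hx, vertexAt_zero]
    subst this
    exact ⟨.nil u, p, rfl, rfl, by simp [AWalk.weight], fun m => by rw [Nat.zero_add]⟩
  | succ k ih =>
    cases p with
    | nil => simp [AWalk.length] at hk
    | cons t h p' =>
      have hk' : k ≤ p'.length := by
        simpa [AWalk.length, Nat.succ_le_succ_iff] using hk
      have hx' : p'.vertexAt k = x := hx
      obtain ⟨q, r, hql, hrl, hw, hv⟩ := ih p' hk' hx'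
      refine ⟨.cons t h q, r, ?_, ?_, ?_, ?_⟩
      · simp [AWalk.length, hql]
      · simp [AWalk.length]; omega
      · simp only [AWalk.weight]
        rw [← hw]; ring
      · intro m
        have : (k + 1 + m) = (k + m) + 1 := by omega
        rw [this]
        exact hv m

variable [Inhabited T]

theorem closed_nonneg (hnc : ¬ HasNegCycle E w) {x : V} (p : AWalk E x x)
    (hp : p.length ≠ 0) : 0 ≤ p.weight w := by
  by_contra hneg
  push_neg at hneg
  obtain ⟨n, hn⟩ : ∃ n, p.length = n + 1 := ⟨p.length - 1, by omega⟩
  apply hnc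
  have hrot : ∀ k : Fin (n+1), p.vertexAt ((finRotate (n+1) k : Fin (n+1)) : ℕ)
      = p.vertexAt ((k : ℕ) + 1) := by
    intro k
    rcases eq_or_ne k (Fin.last n) with h | h
    · subst h
      rw [finRotate_succ_apply, Fin.last_add_one]
      have h1 : ((0 : Fin (n+1)) : ℕ) = 0 := rfl
      rw [h1, vertexAt_zero]
      have h2 : (Fin.last n : ℕ) + 1 = p.length := by simp [hn]
      rw [h2, vertexAt_length]
    · have hlt : k < Fin.last n := lt_of_le_of_ne (Fin.le_last k) h
      rw [finRotate_succ_apply, Fin.val_add_one_of_lt hlt]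
  refine ⟨n, fun k => (p.vertexAt k, p.annAt k), ?_, ?_⟩
  · intro k
    have hk : (k : ℕ) < p.length := by rw [hn]; exact k.isLt
    dsimp only
    rw [hrot k]
    exact edge_spec p k hk
  · have heq : cycleWeight w (fun k : Fin (n+1) => (p.vertexAt k, p.annAt k))
        = p.weight w := by
      unfold cycleWeight
      dsimp only
      rw [weight_eq, hn, ← Fin.sum_univ_eq_sum_range]
      exact Finset.sum_congr rfl fun k _ => by rw [hrot k]
    rw [heq]; exact hneg

theorem shorten_core [Fintype V] (hnc : ¬ HasNegCycle E w)
    {n : ℕ}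
    (ih : ∀ {u v : V} (p : AWalk E u v), p.length ≤ n →
      ∃ q : AWalk E u v, q.length ≤ Fintype.card V ∧ q.weight w ≤ p.weight w)
    {u v : V} (p : AWalk E u v) (hp : p.length ≤ n + 1)
    (a b : Fin (p.length + 1)) (hlt : a < b)
    (heq : p.vertexAt a = p.vertexAt b) :
    ∃ q : AWalk E u v, q.length ≤ Fintype.card V ∧ q.weight w ≤ p.weight w := by
  have hab : (a : ℕ) < (b : ℕ) := hlt
  have ha : (a : ℕ) ≤ p.length := Nat.lt_succ_iff.mp a.isLt
  have hb : (b : ℕ) ≤ p.length := Nat.lt_succ_iff.mp b.isLt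
  obtain ⟨q, r, hql, hrl, hwqr, hv⟩ := splitAt w p a ha rfl
  have hmid : r.vertexAt ((b : ℕ) - a) = p.vertexAt a := by
    rw [hv, show (a : ℕ) + ((b : ℕ) - a) = b by omega]
    exact heq.symm
  obtain ⟨s, r2, hsl, hr2l, hws, -⟩ := splitAt w r ((b : ℕ) - a) (by omega) hmid
  have hs0 : s.length ≠ 0 := by omega
  have hsw : 0 ≤ s.weight w := closed_nonneg w hnc s hs0
  obtain ⟨q', hq'l, hq'w⟩ := ih (q.append r2) (by rw [length_append]; omega)
  refine ⟨q', hq'l, ?_⟩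
  have h1 : (q.append r2).weight w = q.weight w + r2.weight w := weight_append w q r2
  linarith

theorem shorten [Fintype V] (hnc : ¬ HasNegCycle E w) :
    ∀ (n : ℕ) {u v : V} (p : AWalk E u v), p.length ≤ n →
      ∃ q : AWalk E u v, q.length ≤ Fintype.card V ∧ q.weight w ≤ p.weight w := by
  intro n
  induction n with
  | zero =>
    intro u v p hp
    refine ⟨p, ?_, le_rfl⟩
    have : 0 < Fintype.card V := Fintype.card_pos_iff.mpr ⟨u⟩
    omega
  | succ n ih =>
    intro u v p hp
    by_cases hle : p.length ≤ Fintype.card V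
    · exact ⟨p, hle, le_rfl⟩
    · push_neg at hle
      have hcard : Fintype.card V < Fintype.card (Fin (p.length + 1)) := by
        simp; omega
      obtain ⟨a, b, hab, heq⟩ :=
        Fintype.exists_ne_map_eq_of_card_lt
          (fun m : Fin (p.length + 1) => p.vertexAt m) hcard
      -- wlog a < b
      rcases lt_or_gt_of_ne (fun h : a = b => hab h) with hlt | hlt
      case _ =>
        exact shorten_core w hnc ih p hp a b hlt heq
      case _ =>
        exact shorten_core w hnc ih p hp b a hlt heq.symm

end AWalk

section Bell

variable {V T : Type*} (E : V → V → T → Prop) (w : V → V → T → ℝ)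
variable [Fintype V] [Fintype T] [Inhabited T]

open Classical in
noncomputable def bell : ℕ → V → ℝ
  | 0, _ => 0
  | n+1, x =>
    (insert (bell n x)
      ((Finset.univ.filter fun e : V × T => E x e.1 e.2).image
        fun e => w x e.1 e.2 + bell n e.1)).min' (Finset.insert_nonempty _ _)

open Classical in
theorem bell_succ (n : ℕ) (x : V) : bell E w (n+1) x =
    (insert (bell E w n x)
      ((Finset.univ.filter fun e : V × T => E x e.1 e.2).image
        fun e => w x e.1 e.2 + bell E w n e.1)).min' (Finset.insert_nonempty _ _) := by
  rw [bell]

theorem bell_succ_le_self (n : ℕ) (x : V) : bell E w (n+1) x ≤ bell E w n x := by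
  classical
  rw [bell_succ]
  exact Finset.min'_le _ _ (Finset.mem_insert_self _ _)

theorem bell_relax {x y : V} {t : T} (h : E x y t) (n : ℕ) :
    bell E w (n+1) x ≤ w x y t + bell E w n y := by
  classical
  rw [bell_succ]
  refine Finset.min'_le _ _ (Finset.mem_insert_of_mem ?_)
  exact Finset.mem_image.mpr ⟨(y, t), by simp [Finset.mem_filter, h], rfl⟩

theorem bell_le_zero (n : ℕ) (x : V) : bell E w n x ≤ 0 := by
  induction n with
  | zero => rw [bell]
  | succ n ih => exact le_trans (bell_succ_le_self E w n x) ih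

theorem bell_le_walk : ∀ (n : ℕ) {x v : V} (p : AWalk E x v), p.length ≤ n →
    bell E w n x ≤ p.weight w := by
  intro n
  induction n with
  | zero =>
    intro x v p hp
    cases p with
    | nil => simp [bell, AWalk.weight]
    | cons t h p' => simp [AWalk.length] at hp
  | succ n ih =>
    intro x v p hp
    cases p with
    | nil =>
      simpa [AWalk.weight] using bell_le_zero E w (n+1) x
    | cons t h p' =>
      have h1 := bell_relax E w h n
      have h2 := ih p' (by simpa [AWalk.length, Nat.succ_le_succ_iff] using hp)
      simp only [AWalk.weight]
      linarith

theorem bell_exists_walk (n : ℕ) (x : V) :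
    ∃ (v : V) (p : AWalk E x v), p.length ≤ n ∧ p.weight w = bell E w n x := by
  classical
  induction n generalizing x with
  | zero => exact ⟨x, .nil x, le_rfl, by rw [bell]; rfl⟩
  | succ n ih =>
    have hmem := Finset.min'_mem (insert (bell E w n x)
      ((Finset.univ.filter fun e : V × T => E x e.1 e.2).image
        fun e => w x e.1 e.2 + bell E w n e.1)) (Finset.insert_nonempty _ _)
    rw [← bell_succ] at hmem
    rcases Finset.mem_insert.mp hmem with heq | hmem'
    · obtain ⟨v, p, hl, hw⟩ := ih x
      exact ⟨v, p, le_trans hl (Nat.le_succ n), by rw [hw, heq]⟩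
    · obtain ⟨e, he, heq⟩ := Finset.mem_image.mp hmem'
      have hE : E x e.1 e.2 := (Finset.mem_filter.mp he).2
      obtain ⟨v, p, hl, hw⟩ := ih e.1
      refine ⟨v, .cons e.2 hE p, by simp [AWalk.length]; omega, ?_⟩
      show w x e.1 e.2 + p.weight w = _
      rw [hw, heq]

theorem bell_relax_card (hnc : ¬ HasNegCycle E w) {x y : V} {t : T} (h : E x y t) :
    bell E w (Fintype.card V) x ≤ w x y t + bell E w (Fintype.card V) y := by
  have h1 := bell_relax E w h (Fintype.card V)
  obtain ⟨v, p, hl, hw⟩ := bell_exists_walk E w (Fintype.card V + 1) x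
  obtain ⟨q, hql, hqw⟩ := AWalk.shorten w hnc (Fintype.card V + 1) p hl
  have h2 : bell E w (Fintype.card V) x ≤ q.weight w := bell_le_walk E w _ q hql
  linarith

end Bell

end BNOMAux
open BNOMAux in
/-- A social choice function `f` is BNOM-implementable iff for each
agent `i` there is a best-case labelling `β` such that `G^β_{i,f}` has no
negative-weight cycle, where edges have weight `w x y t = t(f x) - t(f y)`. -/
theorem bnom_implementable_iff_no_neg_cycle
    {I O : Type*} [DecidableEq I] [Fintype I] (T : I → Type*)
    [∀ i, Fintype (T i)] [∀ i, Nonempty (T i)]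
    (val : ∀ i, T i → O → ℝ)
    (f : (∀ j, T j) → O) :
    (∃ p : (∀ j, T j) → I → ℝ, ∀ (i : I) (t b : T i),
      (⨆ x : ∀ j, T j,
        (val i t (f (Function.update x i t)) + p (Function.update x i t) i)) ≥
      ⨆ x : ∀ j, T j,
        (val i t (f (Function.update x i b)) + p (Function.update x i b) i)) ↔
    (∀ i : I, ∃ β : T i → T i → (∀ j, T j),
      ¬ HasNegCycle (edgeB i β) (fun x y t => val i t (f x) - val i t (f y))) := by
  classical
  constructor
  · rintro ⟨p, hp⟩ i
    have hmax : ∀ t b : T i, ∃ z : ∀ j, T j, ∀ x : ∀ j, T j,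
        val i t (f (Function.update x i b)) + p (Function.update x i b) i ≤
        val i t (f (Function.update z i b)) + p (Function.update z i b) i := fun t b =>
      Finite.exists_max _
    choose β hβ using hmax
    have hbdd : ∀ t b : T i, BddAbove (Set.range fun x : ∀ j, T j =>
        val i t (f (Function.update x i b)) + p (Function.update x i b) i) := fun t b =>
      Set.Finite.bddAbove (Set.finite_range _)
    have hsup : ∀ t b : T i,
        (⨆ x : ∀ j, T j, (val i t (f (Function.update x i b)) + p (Function.update x i b) i)) =
        val i t (f (Function.update (β t b) i b)) + p (Function.update (β t b) i b) i :=
      fun t b => le_antisymm (ciSup_le (hβ t b)) (le_ciSup (hbdd t b) (β t b))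
    refine ⟨β, ?_⟩
    rintro ⟨n, c, hc, hneg⟩
    have key : ∀ (x y : ∀ j, T j) (t : T i), edgeB i β x y t →
        val i t (f y) + p y i ≤ val i t (f x) + p x i := by
      rintro x y t (⟨k, hx, hy⟩ | ⟨k, hx, hy⟩)
      · have hyk : Function.update y i k = y := by
          funext j
          rcases eq_or_ne j i with rfl | hj
          · simp [hy]
          · simp [Function.update_of_ne hj]
        have h1 := hβ t k y
        rwa [hyk, ← hx] at h1
      · have h1 : val i t (f y) + p y i ≤
            ⨆ x : ∀ j, T j, (val i t (f (Function.update x i k)) + p (Function.update x i k) i) := by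
          rw [hsup t k, hy]
        have h2 := hp i t k
        rw [hsup t t, ← hx] at h2
        exact le_trans h1 (le_trans h2 le_rfl)
    have hterm : ∀ k : Fin (n+1),
        p (c ((finRotate (n+1)) k)).1 i - p (c k).1 i ≤
          val i (c k).2 (f (c k).1) - val i (c k).2 (f (c ((finRotate (n+1)) k)).1) := by
      intro k
      have := key _ _ _ (hc k)
      linarith
    have hzero : ∑ k : Fin (n+1),
        (p (c ((finRotate (n+1)) k)).1 i - p (c k).1 i) = 0 := by
      rw [Finset.sum_sub_distrib,
        Equiv.sum_comp (finRotate (n+1)) (fun k => p (c k).1 i), sub_self]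
    have hsum := Finset.sum_le_sum (fun k (_ : k ∈ Finset.univ) => hterm k)
    rw [hzero] at hsum
    unfold cycleWeight at hneg
    linarith
  · intro h
    choose β hβ using h
    letI : ∀ i : I, Inhabited (T i) := fun i => Classical.inhabited_of_nonempty inferInstance
    set d : ∀ i : I, (∀ j, T j) → ℝ := fun i =>
      bell (edgeB i (β i)) (fun x y t => val i t (f x) - val i t (f y))
        (Fintype.card (∀ j, T j)) with hd
    refine ⟨fun x i => -(d i x), ?_⟩
    intro i t b
    have key : ∀ (x y : ∀ j, T j) (s : T i), edgeB i (β i) x y s →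
        val i s (f y) + -(d i y) ≤ val i s (f x) + -(d i x) := by
      intro x y s he
      have := bell_relax_card (edgeB i (β i))
        (fun x y t => val i t (f x) - val i t (f y)) (hβ i) he
      have hdx : d i x ≤ (val i s (f x) - val i s (f y)) + d i y := this
      linarith
    have h1 : ∀ z : ∀ j, T j,
        val i t (f (Function.update z i b)) + -(d i (Function.update z i b)) ≤
        val i t (f (Function.update (β i t b) i b)) + -(d i (Function.update (β i t b) i b)) := by
      intro z
      exact key _ _ _ (Or.inl ⟨b, rfl, by simp⟩)
    have h2 : val i t (f (Function.update (β i t b) i b)) + -(d i (Function.update (β i t b) i b)) ≤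
        val i t (f (Function.update (β i t t) i t)) + -(d i (Function.update (β i t t) i t)) :=
      key _ _ _ (Or.inr ⟨b, rfl, rfl⟩)
    have hbdd : BddAbove (Set.range fun x : ∀ j, T j =>
        val i t (f (Function.update x i t)) + -(d i (Function.update x i t))) :=
      Set.Finite.bddAbove (Set.finite_range _)
    calc (⨆ x : ∀ j, T j,
          (val i t (f (Function.update x i b)) + -(d i (Function.update x i b)))) ≤
        val i t (f (Function.update (β i t t) i t)) + -(d i (Function.update (β i t t) i t)) :=
          ciSup_le fun z => le_trans (h1 z) h2
      _ ≤ ⨆ x : ∀ j, T j,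
          (val i t (f (Function.update x i t)) + -(d i (Function.update x i t))) :=
          le_ciSup hbdd (β i t t)
end

section
/- A social choice function f is WNOM-implementable if and only if for each agent i there exists a worst-case labelling ω such that the graph G^ω_{i,f} contains no negative-weight cycles. -/
/-- Edges of the graph `G^ω_{i,f}` for a worst-case labelling `ω` of agent `i`.
The labelling entry `ω t k` (true type `t`, bid `k`) is recorded as a full profile
whose `i`-th coordinate is irrelevant (it is overwritten by the bid `k`).
An edge from `x` to `y` annotated `t` is either a labelling edge,
from any node `(k, x₋ᵢ)` to `(k, ω_{t k})`, or an incentive-compatibility edge,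
from `(t, ω_{t t})` to `(k, ω_{t k})`. -/
def edgeW {I : Type*} [DecidableEq I] {T : I → Type*} (i : I)
    (ω : T i → T i → (∀ j, T j)) (x y : ∀ j, T j) (t : T i) : Prop :=
  (∃ k : T i, x i = k ∧ y = Function.update (ω t k) i k) ∨
  (∃ k : T i, x = Function.update (ω t t) i t ∧ y = Function.update (ω t k) i k)

open Finset Function

section Walks

variable {P T : Type*} (E : P → P → T → Prop) (w : P → P → T → ℝ)

def IsWalk (v : ℕ → P) (a : ℕ → T) (ℓ : ℕ) : Prop :=
  ∀ k < ℓ, E (v k) (v (k + 1)) (a k)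

def walkWeight (v : ℕ → P) (a : ℕ → T) (ℓ : ℕ) : ℝ :=
  ∑ k ∈ range ℓ, w (v k) (v (k + 1)) (a k)

def appendSeq {α : Type*} (ℓ : ℕ) (s s' : ℕ → α) : ℕ → α :=
  fun k => if k < ℓ then s k else s' (k - ℓ)

variable {E w} {v v' : ℕ → P} {a a' : ℕ → T}

section appendSeq

variable {α : Type*} {ℓ k : ℕ} {s s' : ℕ → α}

lemma appendSeq_of_lt (hk : k < ℓ) : appendSeq ℓ s s' k = s k := if_pos hk

@[simp]
lemma appendSeq_add (k : ℕ) : appendSeq ℓ s s' (ℓ + k) = s' k := by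
  simp [appendSeq]

lemma appendSeq_of_le (hjoin : s ℓ = s' 0) (hk : k ≤ ℓ) : appendSeq ℓ s s' k = s k := by
  rcases hk.lt_or_eq with hk | rfl
  · exact appendSeq_of_lt hk
  · simpa [appendSeq] using hjoin.symm

end appendSeq

lemma IsWalk.mono {ℓ ℓ' : ℕ} (h : IsWalk E v a ℓ) (hℓ : ℓ' ≤ ℓ) : IsWalk E v a ℓ' :=
  fun k hk => h k (hk.trans_le hℓ)

lemma IsWalk.shift {j ℓ : ℕ} (h : IsWalk E v a (j + ℓ)) :
    IsWalk E (fun k => v (j + k)) (fun k => a (j + k)) ℓ :=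
  fun k hk => h (j + k) (by omega)

lemma walkWeight_add (j ℓ : ℕ) :
    walkWeight w v a (j + ℓ) =
      walkWeight w v a j + walkWeight w (fun k => v (j + k)) (fun k => a (j + k)) ℓ :=
  sum_range_add _ j ℓ

lemma IsWalk.append {ℓ ℓ' : ℕ} (h : IsWalk E v a ℓ) (h' : IsWalk E v' a' ℓ')
    (hjoin : v ℓ = v' 0) :
    IsWalk E (appendSeq ℓ v v') (appendSeq ℓ a a') (ℓ + ℓ') := by
  intro k hk
  by_cases hkℓ : k < ℓ
  · rw [appendSeq_of_lt hkℓ, appendSeq_of_lt hkℓ, appendSeq_of_le hjoin hkℓ]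
    exact h k hkℓ
  · obtain ⟨k, rfl⟩ := Nat.exists_eq_add_of_le (not_lt.1 hkℓ)
    simpa only [appendSeq_add, Nat.add_assoc] using h' k (by omega)

lemma walkWeight_append {ℓ ℓ' : ℕ} (hjoin : v ℓ = v' 0) :
    walkWeight w (appendSeq ℓ v v') (appendSeq ℓ a a') (ℓ + ℓ') =
      walkWeight w v a ℓ + walkWeight w v' a' ℓ' := by
  rw [walkWeight_add]
  congr 1
  · refine sum_congr rfl fun k hk => ?_
    have hk := mem_range.1 hk
    rw [appendSeq_of_lt hk, appendSeq_of_lt hk, appendSeq_of_le hjoin hk]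
  · simp only [appendSeq_add]

lemma IsWalk.exists_snoc {ℓ : ℕ} {y : P} {t : T} (h : IsWalk E v a ℓ) (he : E (v ℓ) y t) :
    ∃ (v' : ℕ → P) (a' : ℕ → T), IsWalk E v' a' (ℓ + 1) ∧ v' (ℓ + 1) = y ∧
      walkWeight w v' a' (ℓ + 1) = walkWeight w v a ℓ + w (v ℓ) y t := by
  let e : ℕ → P := fun k => if k = 0 then v ℓ else y
  have hjoin : v ℓ = e 0 := rfl
  have he' : IsWalk E e (fun _ => t) 1 := fun k hk => by
    obtain rfl : k = 0 := by omega
    exact he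
  refine ⟨appendSeq ℓ v e, appendSeq ℓ a fun _ => t, h.append he' hjoin, appendSeq_add 1, ?_⟩
  rw [walkWeight_append hjoin]
  simp [walkWeight, e]

lemma mul_le_walkWeight {m : ℝ} (hm : ∀ x y t, m ≤ w x y t) (ℓ : ℕ) :
    ℓ * m ≤ walkWeight w v a ℓ := by
  simpa [walkWeight] using card_nsmul_le_sum (range ℓ) _ m fun k _ => hm (v k) (v (k + 1)) (a k)

lemma IsWalk.walkWeight_nonneg_of_closed (hneg : ¬ HasNegCycle E w) {n : ℕ}
    (h : IsWalk E v a (n + 1)) (hv : v (n + 1) = v 0) : 0 ≤ walkWeight w v a (n + 1) := by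
  let c : Fin (n + 1) → P × T := fun k => (v k, a k)
  have hnext : ∀ k, (c (finRotate (n + 1) k)).1 = v (k + 1) := by
    intro k
    simp only [c, coe_finRotate]
    split_ifs with hk
    · rw [hk, Fin.val_last, hv]
    · rfl
  have hcycle : IsCycle E c := fun k => by
    rw [hnext]
    exact h k k.isLt
  have hweight : cycleWeight w c = walkWeight w v a (n + 1) := by
    simp only [cycleWeight, hnext]
    exact Fin.sum_univ_eq_sum_range (fun k => w (v k) (v (k + 1)) (a k)) (n + 1)
  by_contra hlt
  exact hneg ⟨n, c, hcycle, by linarith⟩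

lemma exists_loop_of_card_le [Finite P] {ℓ : ℕ} (hℓ : Nat.card P ≤ ℓ) (v : ℕ → P) :
    ∃ j n r, j + (n + 1) + r = ℓ ∧ v (j + (n + 1)) = v j := by
  obtain ⟨k₁, k₂, hne, heq⟩ : ∃ k₁ k₂ : Fin (ℓ + 1), k₁ ≠ k₂ ∧ v k₁ = v k₂ := by
    by_contra! hinj
    have := Nat.card_le_card_of_injective (fun k : Fin (ℓ + 1) => v k)
      fun k₁ k₂ h => not_not.1 fun hne => hinj k₁ k₂ hne h
    simp only [Nat.card_eq_fintype_card, Fintype.card_fin] at this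
    omega
  rcases Fin.lt_or_lt_of_ne hne with hlt | hlt
  · exact ⟨k₁, k₂ - k₁ - 1, ℓ - k₂, by omega, by rw [heq]; congr 1; omega⟩
  · exact ⟨k₂, k₁ - k₂ - 1, ℓ - k₁, by omega, by rw [← heq]; congr 1; omega⟩

lemma IsWalk.exists_short [Finite P] (hneg : ¬ HasNegCycle E w) {ℓ : ℕ}
    (h : IsWalk E v a ℓ) :
    ∃ (v' : ℕ → P) (a' : ℕ → T) (ℓ' : ℕ), ℓ' < Nat.card P ∧ IsWalk E v' a' ℓ' ∧
      v' ℓ' = v ℓ ∧ walkWeight w v' a' ℓ' ≤ walkWeight w v a ℓ := by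
  induction ℓ using Nat.strong_induction_on generalizing v a with
  | _ ℓ ih =>
  by_cases hℓ : ℓ < Nat.card P
  · exact ⟨v, a, ℓ, hℓ, h, rfl, le_rfl⟩
  obtain ⟨j, n, r, rfl, hloop⟩ := exists_loop_of_card_le (not_lt.1 hℓ) v
  let vr : ℕ → P := fun k => v (j + (n + 1) + k)
  let ar : ℕ → T := fun k => a (j + (n + 1) + k)
  have hjoin : v j = vr 0 := hloop.symm
  have hprefix : IsWalk E v a j := h.mono (by omega)
  have hloopWalk : IsWalk E (fun k => v (j + k)) (fun k => a (j + k)) (n + 1) :=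
    (h.mono (by omega)).shift
  have hsuffix : IsWalk E vr ar r := h.shift
  obtain ⟨v', a', ℓ', hℓ', h', hend, hle⟩ :=
    ih (j + r) (by omega) (hprefix.append hsuffix hjoin)
  refine ⟨v', a', ℓ', hℓ', h', by rw [hend, appendSeq_add], ?_⟩
  have hcut := hloopWalk.walkWeight_nonneg_of_closed hneg hloop
  rw [walkWeight_append hjoin] at hle
  rw [walkWeight_add, walkWeight_add]
  linarith

theorem exists_potential_of_not_hasNegCycle [Finite P] [Finite T] [Nonempty T]
    (hneg : ¬ HasNegCycle E w) : ∃ φ : P → ℝ, ∀ x y t, E x y t → φ y ≤ φ x + w x y t := by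
  let S : P → Set ℝ := fun y => {r | ∃ v a ℓ, IsWalk E v a ℓ ∧ v ℓ = y ∧ walkWeight w v a ℓ = r}
  have hne : ∀ y, (S y).Nonempty := fun y =>
    ⟨0, fun _ => y, fun _ => Classical.arbitrary T, 0, fun k h => (Nat.not_lt_zero k h).elim,
      rfl, rfl⟩
  obtain ⟨m, hm0, hm⟩ : ∃ m ≤ 0, ∀ x y t, m ≤ w x y t := by
    obtain ⟨m, hm⟩ := Finite.bddBelow_range fun e : P × P × T => w e.1 e.2.1 e.2.2
    exact ⟨min m 0, min_le_right _ _, fun x y t => (min_le_left _ _).trans (hm ⟨(x, y, t), rfl⟩)⟩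
  have hbdd : ∀ y, BddBelow (S y) := by
    refine fun y => ⟨Nat.card P * m, ?_⟩
    rintro _ ⟨v, a, ℓ, h, -, rfl⟩
    obtain ⟨v', a', ℓ', hℓ', -, -, hle⟩ := h.exists_short hneg
    calc (Nat.card P : ℝ) * m ≤ ℓ' * m :=
          mul_le_mul_of_nonpos_right (by exact_mod_cast hℓ'.le) hm0
      _ ≤ walkWeight w v' a' ℓ' := mul_le_walkWeight hm ℓ'
      _ ≤ _ := hle
  refine ⟨fun y => sInf (S y), fun x y t hE => ?_⟩
  rw [← sub_le_iff_le_add]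
  refine le_csInf (hne x) ?_
  rintro _ ⟨v, a, ℓ, h, rfl, rfl⟩
  obtain ⟨v', a', h', hend, hweight⟩ := h.exists_snoc (w := w) hE
  have := csInf_le (hbdd y) ⟨v', a', ℓ + 1, h', hend, hweight⟩
  linarith

theorem not_hasNegCycle_of_potential (φ : P → ℝ)
    (hφ : ∀ x y t, E x y t → φ y ≤ φ x + w x y t) : ¬ HasNegCycle E w := by
  rintro ⟨n, c, hc, hneg⟩
  have htelescope : ∑ k, (φ (c (finRotate (n + 1) k)).1 - φ (c k).1) = 0 := by
    rw [sum_sub_distrib, Equiv.sum_comp (finRotate (n + 1)) (fun k => φ (c k).1), sub_self]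
  have : 0 ≤ cycleWeight w c := by
    rw [← htelescope]
    exact sum_le_sum fun k _ => by linarith [hφ _ _ _ (hc k)]
  linarith

theorem not_hasNegCycle_iff_exists_potential [Finite P] [Finite T] [Nonempty T] :
    ¬ HasNegCycle E w ↔ ∃ φ : P → ℝ, ∀ x y t, E x y t → φ y ≤ φ x + w x y t :=
  ⟨exists_potential_of_not_hasNegCycle, fun ⟨φ, hφ⟩ => not_hasNegCycle_of_potential φ hφ⟩

end Walks

section WNOM

variable {I : Type*} [DecidableEq I] {T : I → Type*}

/-- `u t x` is the utility of agent `i` of true type `t` at profile `x`, payment included. -/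
def SatisfiesWNOM (i : I) (u : T i → (∀ j, T j) → ℝ) : Prop :=
  ∀ t b : T i, (⨅ x, u t (update x i t)) ≥ ⨅ x, u t (update x i b)

theorem satisfiesWNOM_iff_exists_labelling [Finite I] [∀ j, Finite (T j)] [∀ j, Nonempty (T j)]
    (i : I) (u : T i → (∀ j, T j) → ℝ) :
    SatisfiesWNOM i u ↔
      ∃ ω : T i → T i → (∀ j, T j), ∀ x y t, edgeW i ω x y t → u t y ≤ u t x := by
  constructor
  · intro h
    choose ω hω using fun t k =>
      exists_eq_ciInf_of_finite (f := fun x : ∀ j, T j => u t (update x i k))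
    refine ⟨ω, ?_⟩
    rintro x y t (⟨k, rfl, rfl⟩ | ⟨k, rfl, rfl⟩)
    · rw [hω]
      have hbdd := Finite.bddBelow_range fun z : ∀ j, T j => u t (update z i (x i))
      exact (ciInf_le hbdd x).trans_eq (by rw [update_eq_self])
    · rw [hω, hω]
      exact h t k
  · rintro ⟨ω, hω⟩ t b
    calc ⨅ x, u t (update x i b) ≤ u t (update (ω t b) i b) :=
          ciInf_le (Finite.bddBelow_range _) _
      _ ≤ u t (update (ω t t) i t) := hω _ _ _ (Or.inr ⟨b, rfl, rfl⟩)
      _ ≤ ⨅ x, u t (update x i t) :=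
          le_ciInf fun x => hω _ _ _ (Or.inl ⟨t, update_self .., rfl⟩)

end WNOM

/-- A social choice function `f` is WNOM-implementable iff for each
agent `i` there is a worst-case labelling `ω` such that `G^ω_{i,f}` has no
negative-weight cycle, where edges have weight `w x y t = t(f x) - t(f y)`. -/
theorem wnom_implementable_iff_no_neg_cycle
    {I O : Type*} [DecidableEq I] [Fintype I] (T : I → Type*)
    [∀ i, Fintype (T i)] [∀ i, Nonempty (T i)]
    (val : ∀ i, T i → O → ℝ)
    (f : (∀ j, T j) → O) :
    (∃ p : (∀ j, T j) → I → ℝ, ∀ (i : I) (t b : T i),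
      (⨅ x : ∀ j, T j,
        (val i t (f (Function.update x i t)) + p (Function.update x i t) i)) ≥
      ⨅ x : ∀ j, T j,
        (val i t (f (Function.update x i b)) + p (Function.update x i b) i)) ↔
    (∀ i : I, ∃ ω : T i → T i → (∀ j, T j),
      ¬ HasNegCycle (edgeW i ω) (fun x y t => val i t (f x) - val i t (f y))) := by
  simp only [not_hasNegCycle_iff_exists_potential]
  constructor
  · rintro ⟨p, hp⟩ i
    obtain ⟨ω, hω⟩ := (satisfiesWNOM_iff_exists_labelling i
      fun t x => val i t (f x) + p x i).1 (hp i)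
    exact ⟨ω, fun x => p x i, fun x y t h => by linarith [hω x y t h]⟩
  · intro h
    choose ω φ hφ using h
    refine ⟨fun x i => φ i x, fun i => (satisfiesWNOM_iff_exists_labelling i
      fun t x => val i t (f x) + φ i x).2 ⟨ω i, fun x y t h => ?_⟩⟩
    linarith [hφ i x y t h]
end

section
/- If a best-case labelling β for agent i is such that G^β_{i,f} contains no negative-weight cycles, then for every p ≥ 2 and every sequence of types t_1, …, t_p ∈ D_i (indices taken cyclically, t_{p+1} = t_1) the sum Σ_{j=1}^{p} [ t_j(f(t_j, β_{jj})) − t_j(f(t_{j+1}, β_{(j+1)(j+1)})) ] is nonnegative; indeed, G^β_{i,f} always contains a cycle of length 2p whose weight equals this sum, regardless of the choice of β. -/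
lemma rot_val {n : ℕ} (hn : 0 < n) (m : Fin n) :
    ((finRotate n m : Fin n) : ℕ) = ((m : ℕ) + 1) % n := by
  cases n with
  | zero => omega
  | succ k =>
    rw [finRotate_succ_apply, Fin.val_add, Fin.val_one', Nat.add_mod_mod]

lemma negcycle_of_cycle {P T : Type*} {n q : ℕ} (h : n = q + 1)
    (E : P → P → T → Prop) (w : P → P → T → ℝ) (c : Fin n → P × T)
    (hc : IsCycle E c) (hw : cycleWeight w c < 0) : HasNegCycle E w := by
  subst h; exact ⟨q, c, hc, hw⟩

/-- For any best-case labelling `β`, any `p ≥ 2` and any (cyclic)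
sequence `t : Fin p → D i` of types, `G^β_{i,f}` contains a cycle of length `2p` whose
weight equals `∑ j, [t_j(f(t_j, β_{jj})) − t_j(f(t_{j+1}, β_{(j+1)(j+1)}))]`; consequently,
if `G^β_{i,f}` has no negative-weight cycle then this sum is nonnegative. -/
theorem bnom_guaranteed_cycles
    {I O : Type*} [DecidableEq I] [Fintype I] (T : I → Type*)
    [∀ i, Fintype (T i)] [∀ i, Nonempty (T i)]
    (val : ∀ i, T i → O → ℝ) (f : (∀ j, T j) → O)
    (i : I) (β : T i → T i → (∀ j, T j))
    (p : ℕ) (hp : 2 ≤ p) (t : Fin p → T i) :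
    (∃ c : Fin (2 * p) → (∀ j, T j) × T i,
      IsCycle (edgeB i β) c ∧
      cycleWeight (fun x y s => val i s (f x) - val i s (f y)) c =
        ∑ j : Fin p,
          (val i (t j) (f (Function.update (β (t j) (t j)) i (t j))) -
            val i (t j)
              (f (Function.update (β (t (finRotate p j)) (t (finRotate p j))) i
                  (t (finRotate p j)))))) ∧
    (¬ HasNegCycle (edgeB i β) (fun x y s => val i s (f x) - val i s (f y)) →
      0 ≤ ∑ j : Fin p,
        (val i (t j) (f (Function.update (β (t j) (t j)) i (t j))) -
          val i (t j)
            (f (Function.update (β (t (finRotate p j)) (t (finRotate p j))) i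
                (t (finRotate p j)))))) := by
  classical
  have hp0 : 0 < p := by omega
  set a : Fin p → (∀ j, T j) := fun j => Function.update (β (t j) (t j)) i (t j) with ha
  set b : Fin p → (∀ j, T j) := fun j =>
    Function.update (β (t j) (t (finRotate p j))) i (t (finRotate p j)) with hb
  set idx : Fin (2 * p) → Fin p := fun m => ⟨(m : ℕ) / 2, by have := m.2; omega⟩ with hidx
  have hidxval : ∀ m : Fin (2 * p), ((idx m : Fin p) : ℕ) = (m : ℕ) / 2 := fun m => rfl
  set c : Fin (2 * p) → (∀ j, T j) × T i := fun m =>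
    if (m : ℕ) % 2 = 0 then (a (idx m), t (idx m)) else (b (idx m), t (idx m)) with hcdef
  have hrot2 : ∀ m : Fin (2 * p), ((finRotate (2 * p) m : Fin (2 * p)) : ℕ) = ((m : ℕ) + 1) % (2 * p) :=
    fun m => rot_val (by omega) m
  have hceven : ∀ (m : Fin (2 * p)) (j : Fin p), (m : ℕ) = 2 * (j : ℕ) → c m = (a j, t j) := by
    intro m j h
    have h2 : (m : ℕ) % 2 = 0 := by omega
    have h3 : idx m = j := Fin.ext (by rw [hidxval]; omega)
    simp only [hcdef]
    rw [if_pos h2, h3]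
  have hcodd : ∀ (m : Fin (2 * p)) (j : Fin p), (m : ℕ) = 2 * (j : ℕ) + 1 → c m = (b j, t j) := by
    intro m j h
    have h2 : ¬ ((m : ℕ) % 2 = 0) := by omega
    have h3 : idx m = j := Fin.ext (by rw [hidxval]; omega)
    simp only [hcdef]
    rw [if_neg h2, h3]
  set e : Fin p × Fin 2 → Fin (2 * p) :=
    fun x => ⟨2 * (x.1 : ℕ) + (x.2 : ℕ), by have := x.1.2; have := x.2.2; omega⟩ with he
  have heval : ∀ x : Fin p × Fin 2, ((e x : Fin (2 * p)) : ℕ) = 2 * (x.1 : ℕ) + (x.2 : ℕ) :=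
    fun x => rfl
  -- key facts about c at even/odd positions and their rotates
  have h0 : ∀ j : Fin p, c (e (j, 0)) = (a j, t j) := by
    intro j; exact hceven _ j (by rw [heval]; simp)
  have h1 : ∀ j : Fin p, c (e (j, 1)) = (b j, t j) := by
    intro j; exact hcodd _ j (by rw [heval]; simp)
  have hrot0 : ∀ j : Fin p, finRotate (2 * p) (e (j, 0)) = e (j, 1) := by
    intro j
    apply Fin.ext
    rw [hrot2, heval, heval]
    have := j.2
    simp only [Fin.val_zero, Fin.val_one]
    rw [Nat.mod_eq_of_lt (by omega)]
  have hrot1 : ∀ j : Fin p, c (finRotate (2 * p) (e (j, 1))) = (a (finRotate p j), t (finRotate p j)) := by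
    intro j
    apply hceven
    rw [hrot2, heval, rot_val hp0]
    have := j.2
    simp only [Fin.val_one]
    by_cases h : (j : ℕ) + 1 < p
    · rw [Nat.mod_eq_of_lt (by omega), Nat.mod_eq_of_lt h]
      omega
    · have hj : (j : ℕ) + 1 = p := by omega
      have h2p : 2 * (j : ℕ) + 1 + 1 = 2 * p := by omega
      rw [h2p, hj, Nat.mod_self, Nat.mod_self]
  have hbij : Function.Bijective e := by
    rw [Fintype.bijective_iff_injective_and_card]
    constructor
    · intro x y hxy
      have hv := congrArg Fin.val hxy
      rw [heval, heval] at hv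
      have hx2 := x.2.2
      have hy2 := y.2.2
      have : (x.1 : ℕ) = (y.1 : ℕ) ∧ (x.2 : ℕ) = (y.2 : ℕ) := by omega
      exact Prod.ext (Fin.ext this.1) (Fin.ext this.2)
    · simp [Fintype.card_prod, Nat.mul_comm]
  -- the cycle property
  have hcyc : IsCycle (edgeB i β) c := by
    intro m
    obtain ⟨x, rfl⟩ := hbij.surjective m
    obtain ⟨j, r⟩ := x
    have hr : r = 0 ∨ r = 1 := by omega
    rcases hr with rfl | rfl
    · rw [hrot0 j, h0 j, h1 j]
      exact Or.inr ⟨t (finRotate p j), by rw [ha], by rw [hb]⟩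
    · rw [h1 j, hrot1 j]
      refine Or.inl ⟨t (finRotate p j), by rw [hb], ?_⟩
      rw [ha]
      simp
  -- the weight computation
  have hwt : cycleWeight (fun x y s => val i s (f x) - val i s (f y)) c =
      ∑ j : Fin p, (val i (t j) (f (a j)) - val i (t j) (f (a (finRotate p j)))) := by
    unfold cycleWeight
    rw [← hbij.sum_comp
      (fun m => val i (c m).2 (f (c m).1) - val i (c m).2 (f (c (finRotate (2 * p) m)).1))]
    rw [Fintype.sum_prod_type]
    refine Finset.sum_congr rfl ?_
    intro j _
    rw [Fin.sum_univ_two]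
    rw [hrot0 j, h0 j, h1 j, hrot1 j]
    ring
  have hfinal : cycleWeight (fun x y s => val i s (f x) - val i s (f y)) c =
      ∑ j : Fin p,
        (val i (t j) (f (Function.update (β (t j) (t j)) i (t j))) -
          val i (t j)
            (f (Function.update (β (t (finRotate p j)) (t (finRotate p j))) i
                (t (finRotate p j))))) := by
    rw [hwt]
  refine ⟨⟨c, hcyc, hfinal⟩, ?_⟩
  intro hneg
  by_contra hlt
  push_neg at hlt
  exact hneg (negcycle_of_cycle (by omega : 2 * p = (2 * p - 1) + 1) _ _ c hcyc
    (by rw [hfinal]; exact hlt))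
end

section
/- If a worst-case labelling ω for agent i is such that G^ω_{i,f} contains no negative-weight cycles, then for every p ≥ 2 and every sequence of types t_1, …, t_p ∈ D_i (indices taken cyclically) the sum Σ_{j=1}^{p} [ t_j(f(t_j, ω_{(j−1)j})) − t_j(f(t_{j+1}, ω_{j(j+1)})) ] is nonnegative; indeed, G^ω_{i,f} always contains a cycle of length 2p whose weight equals this sum, regardless of the choice of ω. -/
lemma val_finRotate {n : ℕ} (k : Fin n) : (finRotate n k).val = (k.val + 1) % n := by
  cases n with
  | zero => exact k.elim0
  | succ m =>
    rw [finRotate_succ_apply, Fin.add_def]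
    simp [Nat.add_mod_mod]

lemma sum_range_two_mul (n : ℕ) (f : ℕ → ℝ) :
    ∑ k ∈ Finset.range (2*n), f k = ∑ k ∈ Finset.range n, (f (2*k) + f (2*k+1)) := by
  induction n with
  | zero => simp
  | succ m ih =>
    have h : 2 * (m+1) = (2*m + 1) + 1 := by ring
    rw [h, Finset.sum_range_succ, Finset.sum_range_succ, Finset.sum_range_succ, ih, add_assoc]

lemma nonneg_of_noNeg {P T : Type*} {E : P → P → T → Prop} {w : P → P → T → ℝ}
    (h : ¬ HasNegCycle E w) {n : ℕ} (hn : 0 < n) (c : Fin n → P × T)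
    (hc : IsCycle E c) : 0 ≤ cycleWeight w c := by
  cases n with
  | zero => omega
  | succ m =>
    by_contra hlt
    exact h ⟨m, c, hc, by linarith⟩

section aux
variable {I O : Type*} [DecidableEq I] {T : I → Type*}
  (i : I) (ω : T i → T i → (∀ j, T j)) {p : ℕ} (hp0 : 0 < p) (t : Fin p → T i)

/-- index in `Fin p` of a natural number, taken mod `p`. -/
def aj (m : ℕ) : Fin p := ⟨m % p, Nat.mod_lt _ hp0⟩

/-- the node sequence of the guaranteed cycle. -/
def nodeF (m : ℕ) : ∀ j, T j :=
  if m % 2 = 0 then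
    Function.update (ω (t ((finRotate p).symm (aj hp0 (m/2)))) (t (aj hp0 (m/2)))) i
      (t (aj hp0 (m/2)))
  else
    Function.update (ω (t (aj hp0 (m/2))) (t (aj hp0 (m/2)))) i (t (aj hp0 (m/2)))

/-- the guaranteed cycle. -/
def cyc : Fin (2*p) → (∀ j, T j) × T i :=
  fun k => (nodeF i ω hp0 t k.val, t (aj hp0 (k.val/2)))

lemma aj_add_p (m : ℕ) : aj hp0 (m + p) = aj hp0 m := by
  simp [aj, Nat.add_mod_right]

lemma finRotate_aj (m : ℕ) : finRotate p (aj hp0 m) = aj hp0 (m+1) := by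
  apply Fin.ext
  rw [val_finRotate]
  simp [aj, Nat.add_mod_mod]

end aux

/-- For any worst-case labelling `ω`, any `p ≥ 2` and any (cyclic)
sequence `t : Fin p → D i` of types, `G^ω_{i,f}` contains a cycle of length `2p` whose
weight equals `∑ j, [t_j(f(t_j, ω_{(j−1)j})) − t_j(f(t_{j+1}, ω_{j(j+1)}))]`; consequently,
if `G^ω_{i,f}` has no negative-weight cycle then this sum is nonnegative. -/
theorem wnom_guaranteed_cycles
    {I O : Type*} [DecidableEq I] [Fintype I] (T : I → Type*)
    [∀ i, Fintype (T i)] [∀ i, Nonempty (T i)]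
    (val : ∀ i, T i → O → ℝ) (f : (∀ j, T j) → O)
    (i : I) (ω : T i → T i → (∀ j, T j))
    (p : ℕ) (hp : 2 ≤ p) (t : Fin p → T i) :
    (∃ c : Fin (2 * p) → (∀ j, T j) × T i,
      IsCycle (edgeW i ω) c ∧
      cycleWeight (fun x y s => val i s (f x) - val i s (f y)) c =
        ∑ j : Fin p,
          (val i (t j)
              (f (Function.update (ω (t ((finRotate p).symm j)) (t j)) i (t j))) -
            val i (t j)
              (f (Function.update (ω (t j) (t (finRotate p j))) i (t (finRotate p j)))))) ∧
    (¬ HasNegCycle (edgeW i ω) (fun x y s => val i s (f x) - val i s (f y)) →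
      0 ≤ ∑ j : Fin p,
        (val i (t j)
            (f (Function.update (ω (t ((finRotate p).symm j)) (t j)) i (t j))) -
          val i (t j)
            (f (Function.update (ω (t j) (t (finRotate p j))) i (t (finRotate p j)))))) := by
  have hp0 : 0 < p := by omega
  set W : (∀ j, T j) → (∀ j, T j) → T i → ℝ :=
    fun x y s => val i s (f x) - val i s (f y) with hW
  set c := cyc i ω hp0 t with hc
  -- value of finRotate on Fin (2*p)
  have hrot : ∀ k : Fin (2*p), (finRotate (2*p) k).val = (k.val + 1) % (2*p) :=
    fun k => val_finRotate k
  -- nodeF is periodic at 2*p, so we may drop the mod in the successor node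
  have hnode_mod : ∀ k : Fin (2*p),
      nodeF i ω hp0 t ((k.val + 1) % (2*p)) = nodeF i ω hp0 t (k.val + 1) := by
    intro k
    rcases lt_or_ge (k.val + 1) (2*p) with h | h
    · rw [Nat.mod_eq_of_lt h]
    · have h1 : k.val + 1 = 2*p := by omega
      rw [h1, Nat.mod_self]
      have h2 : (2*p) % 2 = 0 := by omega
      have h3 : (2*p)/2 = p := by omega
      simp only [nodeF, h2, h3]
      norm_num
      rw [show aj hp0 p = aj hp0 0 from by simpa using aj_add_p hp0 0]
  have hIsC : IsCycle (edgeW i ω) c := by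
    intro k
    have hkv := k.isLt
    have hnext : (c (finRotate (2*p) k)).1 = nodeF i ω hp0 t (k.val + 1) := by
      rw [hc]
      show nodeF i ω hp0 t (finRotate (2*p) k).val = _
      rw [hrot k, hnode_mod k]
    have hc2 : (c k).2 = t (aj hp0 (k.val/2)) := rfl
    rcases Nat.even_or_odd k.val with ⟨j, hj⟩ | ⟨j, hj⟩
    · -- even position: labelling edge
      left
      rw [hc2]
      refine ⟨t (aj hp0 (k.val/2)), ?_, ?_⟩
      · show (nodeF i ω hp0 t k.val) i = _
        have h2 : k.val % 2 = 0 := by omega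
        simp [nodeF, h2]
      · rw [hnext]
        have h2 : (k.val + 1) % 2 = 1 := by omega
        have h3 : (k.val + 1)/2 = k.val/2 := by omega
        simp [nodeF, h2, h3]
    · -- odd position: incentive-compatibility edge
      right
      rw [hc2]
      refine ⟨t (aj hp0 (k.val/2 + 1)), ?_, ?_⟩
      · show (nodeF i ω hp0 t k.val) = _
        have h2 : k.val % 2 = 1 := by omega
        simp [nodeF, h2]
      · rw [hnext]
        have h2 : (k.val + 1) % 2 = 0 := by omega
        have h3 : (k.val + 1)/2 = k.val/2 + 1 := by omega
        have h4 : (finRotate p).symm (aj hp0 (k.val/2 + 1)) = aj hp0 (k.val/2) := by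
          rw [← finRotate_aj hp0 (k.val/2), Equiv.symm_apply_apply]
        simp [nodeF, h2, h3, h4]
  have hweight : cycleWeight W c =
      ∑ j : Fin p,
        (val i (t j)
            (f (Function.update (ω (t ((finRotate p).symm j)) (t j)) i (t j))) -
          val i (t j)
            (f (Function.update (ω (t j) (t (finRotate p j))) i (t (finRotate p j))))) := by
    have hterm : ∀ k : Fin (2*p),
        W (c k).1 (c (finRotate (2*p) k)).1 (c k).2 =
        W (nodeF i ω hp0 t k.val) (nodeF i ω hp0 t (k.val + 1)) (t (aj hp0 (k.val/2))) := by
      intro k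
      congr 1
      show nodeF i ω hp0 t (finRotate (2*p) k).val = _
      rw [hrot k, hnode_mod k]
    rw [cycleWeight]
    calc ∑ k : Fin (2*p), W (c k).1 (c (finRotate (2*p) k)).1 (c k).2
        = ∑ k : Fin (2*p),
            W (nodeF i ω hp0 t k.val) (nodeF i ω hp0 t (k.val+1)) (t (aj hp0 (k.val/2))) :=
          Finset.sum_congr rfl (fun k _ => hterm k)
      _ = ∑ m ∈ Finset.range (2*p),
            W (nodeF i ω hp0 t m) (nodeF i ω hp0 t (m+1)) (t (aj hp0 (m/2))) :=
          Fin.sum_univ_eq_sum_range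
            (fun m => W (nodeF i ω hp0 t m) (nodeF i ω hp0 t (m+1)) (t (aj hp0 (m/2)))) (2*p)
      _ = ∑ m ∈ Finset.range p,
            (W (nodeF i ω hp0 t (2*m)) (nodeF i ω hp0 t (2*m+1)) (t (aj hp0 ((2*m)/2))) +
             W (nodeF i ω hp0 t (2*m+1)) (nodeF i ω hp0 t (2*m+2)) (t (aj hp0 ((2*m+1)/2)))) := by
          rw [sum_range_two_mul]
      _ = ∑ m ∈ Finset.range p,
            (val i (t (aj hp0 m))
              (f (Function.update (ω (t ((finRotate p).symm (aj hp0 m))) (t (aj hp0 m))) i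
                  (t (aj hp0 m)))) -
             val i (t (aj hp0 m))
              (f (Function.update (ω (t (aj hp0 m)) (t (finRotate p (aj hp0 m)))) i
                  (t (finRotate p (aj hp0 m)))))) := by
          refine Finset.sum_congr rfl (fun m _ => ?_)
          have e0 : (2*m) % 2 = 0 := by omega
          have e1 : (2*m+1) % 2 = 1 := by omega
          have e2 : (2*m+2) % 2 = 0 := by omega
          have d0 : (2*m)/2 = m := by omega
          have d1 : (2*m+1)/2 = m := by omega
          have d2 : (2*m+2)/2 = m+1 := by omega
          have h4 : (finRotate p).symm (aj hp0 (m + 1)) = aj hp0 m := by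
            rw [← finRotate_aj hp0 m, Equiv.symm_apply_apply]
          have h5 : finRotate p (aj hp0 m) = aj hp0 (m+1) := finRotate_aj hp0 m
          simp only [nodeF, e0, e1, e2, d0, d1, d2, if_pos, if_neg, hW]
          norm_num [h4, h5]
      _ = ∑ j : Fin p,
            (val i (t j)
                (f (Function.update (ω (t ((finRotate p).symm j)) (t j)) i (t j))) -
              val i (t j)
                (f (Function.update (ω (t j) (t (finRotate p j))) i (t (finRotate p j))))) := by
          rw [← Fin.sum_univ_eq_sum_range (fun m =>
            (val i (t (aj hp0 m))
              (f (Function.update (ω (t ((finRotate p).symm (aj hp0 m))) (t (aj hp0 m))) i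
                  (t (aj hp0 m)))) -
             val i (t (aj hp0 m))
              (f (Function.update (ω (t (aj hp0 m)) (t (finRotate p (aj hp0 m)))) i
                  (t (finRotate p (aj hp0 m))))))) p]
          refine Finset.sum_congr rfl (fun j _ => ?_)
          have : aj hp0 (j : ℕ) = j := by
            apply Fin.ext; simp [aj, Nat.mod_eq_of_lt j.isLt]
          rw [this]
  refine ⟨⟨c, hIsC, hweight⟩, fun hno => ?_⟩
  rw [← hweight]
  exact nonneg_of_noNeg hno (by omega) c hIsC
end

section
/- Label monotonicity: for a single-parameter agent i, if β (respectively ω) is a best-case (respectively worst-case) labelling whose graph G^β_{i,f} (respectively G^ω_{i,f}) contains no negative-weight cycles, then for all types t_j, t_k ∈ D_i one has (t_j − t_k)·(f_i(t_j, β_{jj}) − f_i(t_k, β_{kk})) ≥ 0, and respectively (t_j − t_k)·(f_i(t_j, ω_{kj}) − f_i(t_k, ω_{jk})) ≥ 0. -/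
/-- **label monotonicity.** For a single-parameter agent `i` with domain
`D i : Finset ℝ`, if the graphs `G^β_{i,f}` and `G^ω_{i,f}` (with single-parameter edge
weights `w x y t = t·f_i(x) − t·f_i(y)`) have no negative-weight cycles, then
`(t_j − t_k)·(f_i(t_j, β_{jj}) − f_i(t_k, β_{kk})) ≥ 0` and
`(t_j − t_k)·(f_i(t_j, ω_{kj}) − f_i(t_k, ω_{jk})) ≥ 0` for all types `t_j, t_k`. -/
theorem label_monotonicity
    {I : Type*} [DecidableEq I] [Fintype I] (D : I → Finset ℝ)
    (f : (∀ j, {x : ℝ // x ∈ D j}) → I → ℝ) (i : I)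
    (β ω : {x : ℝ // x ∈ D i} → {x : ℝ // x ∈ D i} → (∀ j, {x : ℝ // x ∈ D j}))
    (hβ : ¬ HasNegCycle (edgeB i β)
      (fun x y t => (t : ℝ) * f x i - (t : ℝ) * f y i))
    (hω : ¬ HasNegCycle (edgeW i ω)
      (fun x y t => (t : ℝ) * f x i - (t : ℝ) * f y i)) :
    (∀ tj tk : {x : ℝ // x ∈ D i},
      0 ≤ ((tj : ℝ) - (tk : ℝ)) *
        (f (Function.update (β tj tj) i tj) i - f (Function.update (β tk tk) i tk) i)) ∧
    (∀ tj tk : {x : ℝ // x ∈ D i},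
      0 ≤ ((tj : ℝ) - (tk : ℝ)) *
        (f (Function.update (ω tk tj) i tj) i - f (Function.update (ω tj tk) i tk) i)) := by
  constructor
  · intro tj tk
    by_contra h
    push_neg at h
    apply hβ
    refine ⟨3, ![(Function.update (β tj tj) i tj, tj), (Function.update (β tj tk) i tk, tj),
      (Function.update (β tk tk) i tk, tk), (Function.update (β tk tj) i tj, tk)], ?_, ?_⟩
    · intro k
      fin_cases k
      · show edgeB i β (Function.update (β tj tj) i tj) (Function.update (β tj tk) i tk) tj
        exact Or.inr ⟨tk, rfl, rfl⟩
      · show edgeB i β (Function.update (β tj tk) i tk) (Function.update (β tk tk) i tk) tj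
        exact Or.inl ⟨tk, rfl, by simp⟩
      · show edgeB i β (Function.update (β tk tk) i tk) (Function.update (β tk tj) i tj) tk
        exact Or.inr ⟨tj, rfl, rfl⟩
      · show edgeB i β (Function.update (β tk tj) i tj) (Function.update (β tj tj) i tj) tk
        exact Or.inl ⟨tj, rfl, by simp⟩
    · have e : cycleWeight (fun x y (t : {x : ℝ // x ∈ D i}) => (t : ℝ) * f x i - (t : ℝ) * f y i)
        ![(Function.update (β tj tj) i tj, tj), (Function.update (β tj tk) i tk, tj),
          (Function.update (β tk tk) i tk, tk), (Function.update (β tk tj) i tj, tk)]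
        = ((tj : ℝ) * f (Function.update (β tj tj) i tj) i - (tj : ℝ) * f (Function.update (β tj tk) i tk) i)
          + (((tj : ℝ) * f (Function.update (β tj tk) i tk) i - (tj : ℝ) * f (Function.update (β tk tk) i tk) i)
          + (((tk : ℝ) * f (Function.update (β tk tk) i tk) i - (tk : ℝ) * f (Function.update (β tk tj) i tj) i)
          + (((tk : ℝ) * f (Function.update (β tk tj) i tj) i - (tk : ℝ) * f (Function.update (β tj tj) i tj) i)
          + 0))) := rfl
      rw [e]
      nlinarith [h]
  · intro tj tk
    by_contra h
    push_neg at h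
    apply hω
    refine ⟨3, ![(Function.update (ω tk tj) i tj, tj), (Function.update (ω tj tj) i tj, tj),
      (Function.update (ω tj tk) i tk, tk), (Function.update (ω tk tk) i tk, tk)], ?_, ?_⟩
    · intro k
      fin_cases k
      · show edgeW i ω (Function.update (ω tk tj) i tj) (Function.update (ω tj tj) i tj) tj
        exact Or.inl ⟨tj, by simp, rfl⟩
      · show edgeW i ω (Function.update (ω tj tj) i tj) (Function.update (ω tj tk) i tk) tj
        exact Or.inr ⟨tk, rfl, rfl⟩
      · show edgeW i ω (Function.update (ω tj tk) i tk) (Function.update (ω tk tk) i tk) tk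
        exact Or.inl ⟨tk, by simp, rfl⟩
      · show edgeW i ω (Function.update (ω tk tk) i tk) (Function.update (ω tk tj) i tj) tk
        exact Or.inr ⟨tj, rfl, rfl⟩
    · have e : cycleWeight (fun x y (t : {x : ℝ // x ∈ D i}) => (t : ℝ) * f x i - (t : ℝ) * f y i)
        ![(Function.update (ω tk tj) i tj, tj), (Function.update (ω tj tj) i tj, tj),
          (Function.update (ω tj tk) i tk, tk), (Function.update (ω tk tk) i tk, tk)]
        = ((tj : ℝ) * f (Function.update (ω tk tj) i tj) i - (tj : ℝ) * f (Function.update (ω tj tj) i tj) i)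
          + (((tj : ℝ) * f (Function.update (ω tj tj) i tj) i - (tj : ℝ) * f (Function.update (ω tj tk) i tk) i)
          + (((tk : ℝ) * f (Function.update (ω tj tk) i tk) i - (tk : ℝ) * f (Function.update (ω tk tk) i tk) i)
          + (((tk : ℝ) * f (Function.update (ω tk tk) i tk) i - (tk : ℝ) * f (Function.update (ω tk tj) i tj) i)
          + 0))) := rfl
      rw [e]
      nlinarith [h]
end

section
/- Within-island monotonicity: for a single-parameter agent i, if β (respectively ω) is a best-case (respectively worst-case) labelling whose graph G^β_{i,f} (respectively G^ω_{i,f}) contains no negative-weight cycles, then for all types t_j, t_k, t_ℓ ∈ D_i one has (t_k − t_ℓ)·(f_i(t_j, β_{kj}) − f_i(t_j, β_{ℓj})) ≥ 0, and respectively (t_k − t_ℓ)·(f_i(t_j, ω_{ℓj}) − f_i(t_j, ω_{kj})) ≥ 0. -/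
/-- **within-island monotonicity.** For a single-parameter agent `i`, if
`G^β_{i,f}` and `G^ω_{i,f}` have no negative-weight cycles, then for all types
`t_j, t_k, t_ℓ` one has `(t_k − t_ℓ)·(f_i(t_j, β_{kj}) − f_i(t_j, β_{ℓj})) ≥ 0` and
`(t_k − t_ℓ)·(f_i(t_j, ω_{ℓj}) − f_i(t_j, ω_{kj})) ≥ 0`. -/
theorem within_island_monotonicity
    {I : Type*} [DecidableEq I] [Fintype I] (D : I → Finset ℝ)
    (f : (∀ j, {x : ℝ // x ∈ D j}) → I → ℝ) (i : I)
    (β ω : {x : ℝ // x ∈ D i} → {x : ℝ // x ∈ D i} → (∀ j, {x : ℝ // x ∈ D j}))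
    (hβ : ¬ HasNegCycle (edgeB i β)
      (fun x y t => (t : ℝ) * f x i - (t : ℝ) * f y i))
    (hω : ¬ HasNegCycle (edgeW i ω)
      (fun x y t => (t : ℝ) * f x i - (t : ℝ) * f y i)) :
    (∀ tj tk tl : {x : ℝ // x ∈ D i},
      0 ≤ ((tk : ℝ) - (tl : ℝ)) *
        (f (Function.update (β tk tj) i tj) i - f (Function.update (β tl tj) i tj) i)) ∧
    (∀ tj tk tl : {x : ℝ // x ∈ D i},
      0 ≤ ((tk : ℝ) - (tl : ℝ)) *
        (f (Function.update (ω tl tj) i tj) i - f (Function.update (ω tk tj) i tj) i)) := by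
  constructor
  · intro tj tk tl
    by_contra h
    push_neg at h
    apply hβ
    refine ⟨1, ![(Function.update (β tk tj) i tj, tk),
                 (Function.update (β tl tj) i tj, tl)], ?_, ?_⟩
    · intro k
      fin_cases k
      · simp only [finRotate_succ_apply]
        exact Or.inl ⟨tj, by simp, by simp⟩
      · simp only [finRotate_succ_apply]
        exact Or.inl ⟨tj, by simp, by simp⟩
    · have h0 : finRotate 2 (0 : Fin 2) = 1 := by decide
      have h1 : finRotate 2 (1 : Fin 2) = 0 := by decide
      show (∑ k : Fin 2, _) < (0:ℝ)
      rw [Fin.sum_univ_two, h0, h1]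
      simp only [Matrix.cons_val_zero, Matrix.cons_val_one, Matrix.head_cons]
      nlinarith [h]
  · intro tj tk tl
    by_contra h
    push_neg at h
    apply hω
    refine ⟨1, ![(Function.update (ω tl tj) i tj, tk),
                 (Function.update (ω tk tj) i tj, tl)], ?_, ?_⟩
    · intro k
      fin_cases k
      · simp only [finRotate_succ_apply]
        exact Or.inl ⟨tj, by simp, by simp⟩
      · simp only [finRotate_succ_apply]
        exact Or.inl ⟨tj, by simp, by simp⟩
    · have h0 : finRotate 2 (0 : Fin 2) = 1 := by decide
      have h1 : finRotate 2 (1 : Fin 2) = 0 := by decide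
      show (∑ k : Fin 2, _) < (0:ℝ)
      rw [Fin.sum_univ_two, h0, h1]
      simp only [Matrix.cons_val_zero, Matrix.cons_val_one, Matrix.head_cons]
      nlinarith [h]
end

section
/- For single-parameter agents with finite domains, an allocation function f is BNOM-implementable if and only if f is overlapping for every agent i. -/
lemma exists_potential (S : Finset ℝ) (o : ℝ → ℝ)
    (mono : ∀ a ∈ S, ∀ b ∈ S, a ≤ b → o a ≤ o b) :
    ∃ q : ℝ → ℝ, ∀ t ∈ S, ∀ b ∈ S, t * o t + q t ≥ t * o b + q b := by
  induction S using Finset.strongInduction with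
  | _ S ih =>
    rcases S.eq_empty_or_nonempty with rfl | hS
    · exact ⟨fun _ => 0, by simp⟩
    set h := S.min' hS with hh
    have hmem : h ∈ S := S.min'_mem hS
    set S' := S.erase h with hS'
    have hsub : S' ⊂ S := Finset.erase_ssubset hmem
    obtain ⟨q, hq⟩ := ih S' hsub
      (fun a ha b hb hab => mono a (Finset.mem_of_mem_erase ha) b (Finset.mem_of_mem_erase hb) hab)
    rcases S'.eq_empty_or_nonempty with hE | hne
    · refine ⟨q, ?_⟩
      intro t ht b hb
      have hth : t = h := by
        by_contra hne'
        have : t ∈ S' := Finset.mem_erase.mpr ⟨hne', ht⟩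
        rw [hE] at this; simp at this
      have hbh : b = h := by
        by_contra hne'
        have : b ∈ S' := Finset.mem_erase.mpr ⟨hne', hb⟩
        rw [hE] at this; simp at this
      subst hth; subst hbh; exact le_refl _
    set Q := S'.sup' hne (fun b => h * o b + q b - h * o h) with hQ
    refine ⟨Function.update q h Q, ?_⟩
    have hhS' : h ∉ S' := Finset.notMem_erase _ _
    have hmin : ∀ t ∈ S, h ≤ t := fun t ht => S.min'_le t ht
    intro t ht b hb
    by_cases htH : t = h <;> by_cases hbH : b = h
    · subst htH; subst hbH; exact le_refl _
    · -- t = h, b ≠ h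
      subst htH
      have hb' : b ∈ S' := Finset.mem_erase.mpr ⟨hbH, hb⟩
      rw [Function.update_self, Function.update_of_ne hbH]
      have := Finset.le_sup' (fun b => h * o b + q b - h * o h) hb'
      rw [← hQ] at this
      linarith
    · -- t ≠ h, b = h
      subst hbH
      have ht' : t ∈ S' := Finset.mem_erase.mpr ⟨htH, ht⟩
      rw [Function.update_self, Function.update_of_ne htH]
      obtain ⟨c, hc, hcQ⟩ := Finset.exists_mem_eq_sup' hne (fun b => h * o b + q b - h * o h)
      rw [← hQ] at hcQ
      have h1 : t * o t + q t ≥ t * o c + q c := hq t ht' c hc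
      have h2 : (t - h) * (o c - o h) ≥ 0 := by
        apply mul_nonneg
        · linarith [hmin t ht]
        · have := mono h hmem c (Finset.mem_of_mem_erase hc) (hmin c (Finset.mem_of_mem_erase hc))
          linarith
      rw [hcQ]
      nlinarith
    · have ht' : t ∈ S' := Finset.mem_erase.mpr ⟨htH, ht⟩
      have hb' : b ∈ S' := Finset.mem_erase.mpr ⟨hbH, hb⟩
      rw [Function.update_of_ne htH, Function.update_of_ne hbH]
      exact hq t ht' b hb'

/-- For single-parameter agents with finite domains `D i : Finset ℝ`,
an allocation function `f` is BNOM-implementable (there are payments `p` such that for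
every agent, every true type and every misreport, the best-case truthful utility is at
least the best-case dishonest utility) if and only if `f` is overlapping for every
agent `i`, i.e. one can pick an outcome `o j ∈ S_{ij} = {f_i(j, x₋ᵢ) : x₋ᵢ}` for each
type `j ∈ D i` such that `o` is non-decreasing in the type. -/
theorem bnom_implementable_iff_overlapping
    {I : Type*} [DecidableEq I] [Fintype I] (D : I → Finset ℝ)
    (hD : ∀ i, (D i).Nonempty)
    (f : (∀ j, {x : ℝ // x ∈ D j}) → I → ℝ) :
    (∃ p : (∀ j, {x : ℝ // x ∈ D j}) → I → ℝ, ∀ (i : I) (t b : {x : ℝ // x ∈ D i}),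
      (⨆ x : ∀ j, {x : ℝ // x ∈ D j},
        ((t : ℝ) * f (Function.update x i t) i + p (Function.update x i t) i)) ≥
      ⨆ x : ∀ j, {x : ℝ // x ∈ D j},
        ((t : ℝ) * f (Function.update x i b) i + p (Function.update x i b) i)) ↔
    (∀ i : I, ∃ o : {x : ℝ // x ∈ D i} → ℝ,
      (∀ j : {x : ℝ // x ∈ D i}, ∃ x : ∀ j, {x : ℝ // x ∈ D j},
        o j = f (Function.update x i j) i) ∧
      (∀ j k : {x : ℝ // x ∈ D i}, (j : ℝ) ≤ (k : ℝ) → o j ≤ o k)) := by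
  classical
  have hNE : Nonempty (∀ j, {x : ℝ // x ∈ D j}) :=
    ⟨fun j => ⟨(hD j).choose, (hD j).choose_spec⟩⟩
  have hNEi : ∀ i, Nonempty {x : ℝ // x ∈ D i} :=
    fun i => ⟨⟨(hD i).choose, (hD i).choose_spec⟩⟩
  constructor
  · rintro ⟨p, hp⟩ i
    have hmax : ∀ t : {x : ℝ // x ∈ D i}, ∃ X : ∀ j, {x : ℝ // x ∈ D j},
        ∀ y, (t : ℝ) * f (Function.update y i t) i + p (Function.update y i t) i ≤
          (t : ℝ) * f (Function.update X i t) i + p (Function.update X i t) i :=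
      fun t => Finite.exists_max _
    choose X hX using hmax
    set o : {x : ℝ // x ∈ D i} → ℝ := fun t => f (Function.update (X t) i t) i with ho
    set pay : {x : ℝ // x ∈ D i} → ℝ := fun t => p (Function.update (X t) i t) i with hpay
    refine ⟨o, fun j => ⟨X j, rfl⟩, ?_⟩
    intro j k hjk
    rcases eq_or_lt_of_le hjk with heq | hlt
    · exact le_of_eq (by rw [Subtype.coe_injective heq])
    have hbdd : ∀ (t b : {x : ℝ // x ∈ D i}), BddAbove (Set.range fun x =>
        (t : ℝ) * f (Function.update x i b) i + p (Function.update x i b) i) :=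
      fun t b => Set.Finite.bddAbove (Set.finite_range _)
    have hsup : ∀ t : {x : ℝ // x ∈ D i},
        (⨆ x, ((t : ℝ) * f (Function.update x i t) i + p (Function.update x i t) i)) =
          (t : ℝ) * o t + pay t :=
      fun t => le_antisymm (ciSup_le (hX t)) (le_ciSup (hbdd t t) (X t))
    have cross : ∀ (s t : {x : ℝ // x ∈ D i}),
        ((s : ℝ) * o t + pay t) ≤
          ⨆ x, ((s : ℝ) * f (Function.update x i t) i + p (Function.update x i t) i) :=
      fun s t => le_ciSup (hbdd s t) (X t)
    have A := hp i k j
    have B := hp i j k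
    rw [hsup k] at A
    rw [hsup j] at B
    have A' : (k : ℝ) * o j + pay j ≤ (k : ℝ) * o k + pay k := le_trans (cross k j) A
    have B' : (j : ℝ) * o k + pay k ≤ (j : ℝ) * o j + pay j := le_trans (cross j k) B
    by_contra hcon
    push_neg at hcon
    nlinarith [mul_pos (sub_pos.mpr hlt) (sub_pos.mpr hcon)]
  · intro H
    choose o ho using H
    choose w hw using fun i => (ho i).1
    have hmono := fun i => (ho i).2
    set obar : ∀ i, ℝ → ℝ := fun i r => if h : r ∈ D i then o i ⟨r, h⟩ else 0 with hobar
    have hq : ∀ i, ∃ q : ℝ → ℝ, ∀ t ∈ D i, ∀ b ∈ D i,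
        t * obar i t + q t ≥ t * obar i b + q b := by
      intro i
      apply exists_potential
      intro a ha b hb hab
      simp only [hobar, dif_pos ha, dif_pos hb]
      exact hmono i ⟨a, ha⟩ ⟨b, hb⟩ hab
    choose q hq using hq
    have he : ∀ (i : I) (s : {x : ℝ // x ∈ D i}), obar i (s : ℝ) = o i s := by
      intro i s
      simp only [hobar, dif_pos s.2, Subtype.coe_eta]
    have hC : ∀ i, ∃ C : ℝ, ∀ (t b : {x : ℝ // x ∈ D i}) (x : ∀ j, {x : ℝ // x ∈ D j}),
        (t : ℝ) * f (Function.update x i b) i - (t : ℝ) * o i b - q i (b : ℝ) ≤ C := by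
      intro i
      have := hNEi i
      obtain ⟨z0, hz0⟩ := Finite.exists_max
        (fun z : ({x : ℝ // x ∈ D i} × {x : ℝ // x ∈ D i} × (∀ j, {x : ℝ // x ∈ D j})) =>
          (z.1 : ℝ) * f (Function.update z.2.2 i z.2.1) i - (z.1 : ℝ) * o i z.2.1
            - q i ((z.2.1 : ℝ)))
      exact ⟨_, fun t b x => hz0 ⟨t, b, x⟩⟩
    choose C hC using hC
    set p : (∀ j, {x : ℝ // x ∈ D j}) → I → ℝ :=
      fun x i' => if Function.update (w i' (x i')) i' (x i') = x
        then q i' ((x i' : ℝ)) else -(C i') with hpdef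
    refine ⟨p, ?_⟩
    intro i t b
    have hbdd : ∀ b' : {x : ℝ // x ∈ D i}, BddAbove (Set.range fun x =>
        (t : ℝ) * f (Function.update x i b') i + p (Function.update x i b') i) :=
      fun b' => Set.Finite.bddAbove (Set.finite_range _)
    have key : ∀ b' : {x : ℝ // x ∈ D i},
        (⨆ x, ((t : ℝ) * f (Function.update x i b') i + p (Function.update x i b') i)) =
          (t : ℝ) * o i b' + q i (b' : ℝ) := by
      intro b'
      apply le_antisymm
      · apply ciSup_le
        intro x
        have hyi : Function.update x i b' i = b' := Function.update_self i b' x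
        simp only [hpdef, hyi]
        split_ifs with hcond
        · have hf : f (Function.update x i b') i = o i b' := by
            rw [← hcond]
            exact (hw i b').symm
          rw [hf]
        · have := hC i t b' x
          linarith
      · have h1 := le_ciSup (hbdd b') (w i b')
        have hyi : Function.update (w i b') i b' i = b' := Function.update_self i b' (w i b')
        have hval : (t : ℝ) * f (Function.update (w i b') i b') i
            + p (Function.update (w i b') i b') i = (t : ℝ) * o i b' + q i (b' : ℝ) := by
          simp only [hpdef, hyi, if_true]
          rw [← hw i b']
        rw [hval] at h1
        exact h1
    rw [key t, key b]
    have := hq i (t : ℝ) t.2 (b : ℝ) b.2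
    rw [he i t, he i b] at this
    exact this
end

section
/- Let (f,p) be a NOM mechanism for a single-parameter agent i whose finite domain D_i contains at least two distinct types. If for some bid t_j ∈ D_i there is a single profile (t_j, x̂_{-i}) at which agent i's utility t·f_i(t_j, x_{-i}) + p_i(t_j, x_{-i}) is simultaneously maximal and minimal over x_{-i} ∈ D_{-i} for every true type t ∈ D_i, then f_i(t_j, x_{-i}) = f_i(t_j, x̂_{-i}) for all x_{-i} ∈ D_{-i}, i.e. the allocation to agent i at bid t_j is constant in the others' bids. -/
/-- Let `(f,p)` be a NOM mechanism for a single-parameter agent `i`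
whose finite domain `D i` contains two distinct types. If for some bid `j` there is a
single profile `(j, x̂₋ᵢ)` at which agent `i`'s utility is simultaneously maximal and
minimal over the others' bids for every true type, then the allocation `f_i(j, ·)` is
constant in the others' bids. -/
theorem nom_best_eq_worst_implies_constant_allocation
    {I : Type*} [DecidableEq I] [Fintype I] (D : I → Finset ℝ)
    (f p : (∀ j, {x : ℝ // x ∈ D j}) → I → ℝ) (i : I)
    -- NOM for agent `i` (both BNOM and WNOM):
    (hNOM : ∀ (t b : {x : ℝ // x ∈ D i}),
      ((⨆ x : ∀ j, {x : ℝ // x ∈ D j},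
        ((t : ℝ) * f (Function.update x i t) i + p (Function.update x i t) i)) ≥
      ⨆ x : ∀ j, {x : ℝ // x ∈ D j},
        ((t : ℝ) * f (Function.update x i b) i + p (Function.update x i b) i)) ∧
      ((⨅ x : ∀ j, {x : ℝ // x ∈ D j},
        ((t : ℝ) * f (Function.update x i t) i + p (Function.update x i t) i)) ≥
      ⨅ x : ∀ j, {x : ℝ // x ∈ D j},
        ((t : ℝ) * f (Function.update x i b) i + p (Function.update x i b) i)))
    (htwo : ∃ a b : {x : ℝ // x ∈ D i}, a ≠ b)
    (j : {x : ℝ // x ∈ D i}) (xhat : ∀ j, {x : ℝ // x ∈ D j})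
    -- `(j, x̂₋ᵢ)` is simultaneously a best and a worst profile for every true type `t`:
    (hboth : ∀ (t : {x : ℝ // x ∈ D i}) (x : ∀ j, {x : ℝ // x ∈ D j}),
      ((t : ℝ) * f (Function.update x i j) i + p (Function.update x i j) i ≤
        (t : ℝ) * f (Function.update xhat i j) i + p (Function.update xhat i j) i) ∧
      ((t : ℝ) * f (Function.update xhat i j) i + p (Function.update xhat i j) i ≤
        (t : ℝ) * f (Function.update x i j) i + p (Function.update x i j) i)) :
    ∀ x : ∀ j, {x : ℝ // x ∈ D j},
      f (Function.update x i j) i = f (Function.update xhat i j) i := by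
  intro x
  obtain ⟨a, b, hab⟩ := htwo
  have ha := le_antisymm (hboth a x).1 (hboth a x).2
  have hb := le_antisymm (hboth b x).1 (hboth b x).2
  have hval : (a : ℝ) ≠ (b : ℝ) := fun h => hab (Subtype.ext h)
  have key : ((a : ℝ) - b) * f (Function.update x i j) i =
      ((a : ℝ) - b) * f (Function.update xhat i j) i := by linarith
  exact mul_left_cancel₀ (sub_ne_zero.mpr hval) key
end

section
/- In any efficient, IR, single-line BNOM bilateral trade mechanism on D_B = D_S = [0,1] whose payments at best-case labelled profiles satisfy the canonical single-line form p_B(x, β^B_x) = x·f(x, β^B_x) − ∫_0^x f(u, β^B_u) du for the buyer and p_S(β^S_y, y) = y·f(β^S_y, y) + ∫_y^1 f(β^S_u, u) du for the seller, the trade is executed at every best-case labelled profile: f(x, β^B_x) = 1 for all x ∈ D_B and f(β^S_y, y) = 1 for all y ∈ D_S. -/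
open MeasureTheory

/-- In any efficient, IR, single-line BNOM bilateral trade mechanism
on `D_B = D_S = [0,1]` with canonical single-line payments at the best-case labelled
profiles, trade is executed at every best-case labelled profile:
`f(x, β^B_x) = 1` for all `x` and `f(β^S_y, y) = 1` for all `y`. -/
theorem single_line_bnom_best_labels_trade
    (f pB pS : ℝ → ℝ → ℝ) (βB βS : ℝ → ℝ)
    -- the labels lie in the domains
    (hβBmem : ∀ x ∈ Set.Icc (0:ℝ) 1, βB x ∈ Set.Icc (0:ℝ) 1)
    (hβSmem : ∀ y ∈ Set.Icc (0:ℝ) 1, βS y ∈ Set.Icc (0:ℝ) 1)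
    -- the allocation is 0/1-valued
    (hf01 : ∀ x ∈ Set.Icc (0:ℝ) 1, ∀ y ∈ Set.Icc (0:ℝ) 1, f x y = 0 ∨ f x y = 1)
    -- efficiency: trade occurs iff the buyer's bid is at least the seller's bid
    (heff : ∀ x ∈ Set.Icc (0:ℝ) 1, ∀ y ∈ Set.Icc (0:ℝ) 1, (f x y = 1 ↔ y ≤ x))
    -- payments are nonnegative
    (hpBnn : ∀ x ∈ Set.Icc (0:ℝ) 1, ∀ y ∈ Set.Icc (0:ℝ) 1, 0 ≤ pB x y)
    (hpSnn : ∀ x ∈ Set.Icc (0:ℝ) 1, ∀ y ∈ Set.Icc (0:ℝ) 1, 0 ≤ pS x y)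
    -- individual rationality for buyer and seller
    (hIRB : ∀ v ∈ Set.Icc (0:ℝ) 1, ∀ y ∈ Set.Icc (0:ℝ) 1, 0 ≤ v * f v y - pB v y)
    (hIRS : ∀ x ∈ Set.Icc (0:ℝ) 1, ∀ u ∈ Set.Icc (0:ℝ) 1, 0 ≤ pS x u - u * f x u)
    -- single-line best-case labelling constraints: for every true type, `(x, β^B_x)`
    -- maximises the buyer's utility, and `(β^S_y, y)` maximises the seller's utility
    (hβBmax : ∀ x ∈ Set.Icc (0:ℝ) 1, ∀ v ∈ Set.Icc (0:ℝ) 1, ∀ y ∈ Set.Icc (0:ℝ) 1,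
      v * f x y - pB x y ≤ v * f x (βB x) - pB x (βB x))
    (hβSmax : ∀ y ∈ Set.Icc (0:ℝ) 1, ∀ u ∈ Set.Icc (0:ℝ) 1, ∀ x ∈ Set.Icc (0:ℝ) 1,
      pS x y - u * f x y ≤ pS (βS y) y - u * f (βS y) y)
    -- BNOM incentive-compatibility at the best-case labels
    (hBNOMB : ∀ v ∈ Set.Icc (0:ℝ) 1, ∀ b ∈ Set.Icc (0:ℝ) 1,
      v * f b (βB b) - pB b (βB b) ≤ v * f v (βB v) - pB v (βB v))
    (hBNOMS : ∀ u ∈ Set.Icc (0:ℝ) 1, ∀ b ∈ Set.Icc (0:ℝ) 1,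
      pS (βS b) b - u * f (βS b) b ≤ pS (βS u) u - u * f (βS u) u)
    -- canonical single-line payments at the labelled profiles
    (hpayB : ∀ x ∈ Set.Icc (0:ℝ) 1,
      pB x (βB x) = x * f x (βB x) - ∫ u in (0:ℝ)..x, f u (βB u))
    (hpayS : ∀ y ∈ Set.Icc (0:ℝ) 1,
      pS (βS y) y = y * f (βS y) y + ∫ u in y..(1:ℝ), f (βS u) u) :
    (∀ x ∈ Set.Icc (0:ℝ) 1, f x (βB x) = 1) ∧
    (∀ y ∈ Set.Icc (0:ℝ) 1, f (βS y) y = 1) := by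
  have h0 : (0:ℝ) ∈ Set.Icc (0:ℝ) 1 := by constructor <;> norm_num
  have h1 : (1:ℝ) ∈ Set.Icc (0:ℝ) 1 := by constructor <;> norm_num
  constructor
  · intro x hx
    by_contra hne
    have hg0 : f x (βB x) = 0 := by
      rcases hf01 x hx (βB x) (hβBmem x hx) with h | h
      · exact h
      · exact absurd h hne
    -- the integral is nonnegative
    have hInn : 0 ≤ ∫ u in (0:ℝ)..x, f u (βB u) := by
      apply intervalIntegral.integral_nonneg hx.1
      intro u hu
      have hu' : u ∈ Set.Icc (0:ℝ) 1 := ⟨hu.1, le_trans hu.2 hx.2⟩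
      rcases hf01 u hu' (βB u) (hβBmem u hu') with h | h <;> simp [h]
    have hpB0 : pB x (βB x) = 0 := by
      have := hpayB x hx
      rw [hg0] at this
      have h1' : pB x (βB x) ≤ 0 := by linarith
      linarith [hpBnn x hx (βB x) (hβBmem x hx)]
    have hfx0 : f x 0 = 1 := (heff x hx 0 h0).mpr hx.1
    have hmax := hβBmax x hx 1 h1 0 h0
    rw [hg0, hpB0, hfx0] at hmax
    -- pB x 0 ≥ 1
    have hirb := hIRB x hx 0 h0
    rw [hfx0] at hirb
    have hx1 : x = 1 := le_antisymm hx.2 (by linarith)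
    have : f x (βB x) = 1 := by
      subst hx1
      exact (heff 1 h1 (βB 1) (hβBmem 1 h1)).mpr (hβBmem 1 h1).2
    exact hne this
  · intro y hy
    by_contra hne
    have hh0 : f (βS y) y = 0 := by
      rcases hf01 (βS y) (hβSmem y hy) y hy with h | h
      · exact h
      · exact absurd h hne
    have hInn : 0 ≤ ∫ u in y..(1:ℝ), f (βS u) u := by
      apply intervalIntegral.integral_nonneg hy.2
      intro u hu
      have hu' : u ∈ Set.Icc (0:ℝ) 1 := ⟨le_trans hy.1 hu.1, hu.2⟩
      rcases hf01 (βS u) (hβSmem u hu') u hu' with h | h <;> simp [h]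
    -- via BNOM with true type u = 1, the label payment is ≤ 0, hence = 0
    have hpay1 := hpayS 1 h1
    have hint1 : (∫ u in (1:ℝ)..(1:ℝ), f (βS u) u) = 0 := intervalIntegral.integral_same
    rw [hint1] at hpay1
    have hbnom := hBNOMS 1 h1 y hy
    rw [hh0, hpay1] at hbnom
    have hpSy0 : pS (βS y) y = 0 :=
      le_antisymm (by linarith) (hpSnn (βS y) (hβSmem y hy) y hy)
    -- maximality with cost 0 and report x = 1
    have hmax := hβSmax y hy 0 h0 1 h1
    rw [hpSy0] at hmax
    have hpS1 : pS 1 y = 0 :=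
      le_antisymm (by linarith) (hpSnn 1 h1 y hy)
    have hf1y : f 1 y = 1 := (heff 1 h1 y hy).mpr hy.2
    have hirs := hIRS 1 h1 y hy
    rw [hf1y, hpS1] at hirs
    have hy0 : y = 0 := le_antisymm (by linarith) hy.1
    have : f (βS y) y = 1 := by
      subst hy0
      exact (heff (βS 0) (hβSmem 0 h0) 0 h0).mpr (hβSmem 0 h0).1
    exact hne this
end

section
/- For every α ≥ 1, there is no efficient, IR, single-line BNOM bilateral trade mechanism on D_B = D_S = [0,1] with payments at best-case labelled profiles of the canonical single-line form (p_B(x, β^B_x) = x·f(x, β^B_x) − ∫_0^x f(u, β^B_u) du and p_S(β^S_y, y) ≥ y·f(β^S_y, y) + ∫_y^1 f(β^S_u, u) du) satisfying α-WBB: any such mechanism has a bid profile (x,y) at which the buyer pays p_B(x,y) = 0 while the seller receives a strictly positive payment p_S(x,y) > 0, so p_S(x,y) ≤ α·p_B(x,y) fails. -/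
open MeasureTheory

/-- For every `α ≥ 1`, no efficient, IR, single-line BNOM bilateral
trade mechanism on `D_B = D_S = [0,1]` with canonical single-line payments at the
best-case labelled profiles satisfies `α`-WBB: any such mechanism has a bid profile
`(x,y)` at which the buyer pays `p_B(x,y) = 0` while the seller receives a strictly
positive payment `p_S(x,y) > 0`, so `p_S(x,y) ≤ α·p_B(x,y)` fails. -/
theorem single_line_bnom_unbounded_subsidy
    (α : ℝ) (hα : 1 ≤ α)
    (f pB pS : ℝ → ℝ → ℝ) (βB βS : ℝ → ℝ)
    (hβBmem : ∀ x ∈ Set.Icc (0:ℝ) 1, βB x ∈ Set.Icc (0:ℝ) 1)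
    (hβSmem : ∀ y ∈ Set.Icc (0:ℝ) 1, βS y ∈ Set.Icc (0:ℝ) 1)
    (hf01 : ∀ x ∈ Set.Icc (0:ℝ) 1, ∀ y ∈ Set.Icc (0:ℝ) 1, f x y = 0 ∨ f x y = 1)
    (heff : ∀ x ∈ Set.Icc (0:ℝ) 1, ∀ y ∈ Set.Icc (0:ℝ) 1, (f x y = 1 ↔ y ≤ x))
    (hpBnn : ∀ x ∈ Set.Icc (0:ℝ) 1, ∀ y ∈ Set.Icc (0:ℝ) 1, 0 ≤ pB x y)
    (hpSnn : ∀ x ∈ Set.Icc (0:ℝ) 1, ∀ y ∈ Set.Icc (0:ℝ) 1, 0 ≤ pS x y)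
    (hIRB : ∀ v ∈ Set.Icc (0:ℝ) 1, ∀ y ∈ Set.Icc (0:ℝ) 1, 0 ≤ v * f v y - pB v y)
    (hIRS : ∀ x ∈ Set.Icc (0:ℝ) 1, ∀ u ∈ Set.Icc (0:ℝ) 1, 0 ≤ pS x u - u * f x u)
    (hβBmax : ∀ x ∈ Set.Icc (0:ℝ) 1, ∀ v ∈ Set.Icc (0:ℝ) 1, ∀ y ∈ Set.Icc (0:ℝ) 1,
      v * f x y - pB x y ≤ v * f x (βB x) - pB x (βB x))
    (hβSmax : ∀ y ∈ Set.Icc (0:ℝ) 1, ∀ u ∈ Set.Icc (0:ℝ) 1, ∀ x ∈ Set.Icc (0:ℝ) 1,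
      pS x y - u * f x y ≤ pS (βS y) y - u * f (βS y) y)
    (hBNOMB : ∀ v ∈ Set.Icc (0:ℝ) 1, ∀ b ∈ Set.Icc (0:ℝ) 1,
      v * f b (βB b) - pB b (βB b) ≤ v * f v (βB v) - pB v (βB v))
    (hBNOMS : ∀ u ∈ Set.Icc (0:ℝ) 1, ∀ b ∈ Set.Icc (0:ℝ) 1,
      pS (βS b) b - u * f (βS b) b ≤ pS (βS u) u - u * f (βS u) u)
    -- canonical single-line payments: exact for the buyer, at least the canonical
    -- (most frugal) amount for the seller
    (hpayB : ∀ x ∈ Set.Icc (0:ℝ) 1,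
      pB x (βB x) = x * f x (βB x) - ∫ u in (0:ℝ)..x, f u (βB u))
    (hpayS : ∀ y ∈ Set.Icc (0:ℝ) 1,
      y * f (βS y) y + ∫ u in y..(1:ℝ), f (βS u) u ≤ pS (βS y) y) :
    ∃ x ∈ Set.Icc (0:ℝ) 1, ∃ y ∈ Set.Icc (0:ℝ) 1,
      pB x y = 0 ∧ 0 < pS x y ∧ ¬ pS x y ≤ α * pB x y := by

  have h01 : (0:ℝ) ∈ Set.Icc (0:ℝ) 1 := by constructor <;> norm_num
  have h11 : (1:ℝ) ∈ Set.Icc (0:ℝ) 1 := by constructor <;> norm_num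
  -- Step A: for every x ∈ [0,1], f x (βB x) = 1 and pB x (βB x) = 0
  have hF1 : ∀ x ∈ Set.Icc (0:ℝ) 1, f x (βB x) = 1 := by
    intro x hx
    by_contra hne
    have hF0 : f x (βB x) = 0 := (hf01 x hx (βB x) (hβBmem x hx)).resolve_right hne
    -- then x = 1 is forced, contradiction with βB 1 ≤ 1
    have hfx0 : f x 0 = 1 := (heff x hx 0 h01).mpr hx.1
    have hpBx0 : pB x 0 ≤ x := by
      have := hIRB x hx 0 h01
      rw [hfx0] at this; linarith
    have hmax := hβBmax x hx 1 h11 0 h01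
    rw [hfx0, hF0] at hmax
    have hpBline : 0 ≤ pB x (βB x) := hpBnn x hx (βB x) (hβBmem x hx)
    -- 1 - pB x 0 ≤ -pB x (βB x) ≤ 0, so x ≥ 1, so x = 1
    have hx1 : x = 1 := le_antisymm hx.2 (by linarith)
    subst hx1
    exact hne ((heff 1 h11 (βB 1) (hβBmem 1 h11)).mpr (hβBmem 1 h11).2)
  have hIeq : ∀ x ∈ Set.Icc (0:ℝ) 1, (∫ u in (0:ℝ)..x, f u (βB u)) = x := by
    intro x hx
    have hcong : Set.EqOn (fun u => f u (βB u)) (fun _ => (1:ℝ)) (Set.uIcc (0:ℝ) x) := by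
      intro u hu
      rw [Set.uIcc_of_le hx.1] at hu
      exact hF1 u ⟨hu.1, le_trans hu.2 hx.2⟩
    rw [intervalIntegral.integral_congr hcong, intervalIntegral.integral_const]
    simp
  have hpB0 : ∀ x ∈ Set.Icc (0:ℝ) 1, pB x (βB x) = 0 := by
    intro x hx
    rw [hpayB x hx, hF1 x hx, hIeq x hx]; ring
  -- Step B: pS (βS y) y ≥ y for all y
  have hStepB : ∀ y ∈ Set.Icc (0:ℝ) 1, y ≤ pS (βS y) y := by
    intro y hy
    have h1 := hβSmax y hy 0 h01 1 h11
    have h2 := hIRS 1 h11 y hy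
    have hf1y : f 1 y = 1 := (heff 1 h11 y hy).mpr hy.2
    rw [hf1y] at h2
    linarith [h1, h2]
  -- Main case split
  by_cases hC : ∃ y ∈ Set.Icc (0:ℝ) 1, 0 < y ∧ βS y < y
  · obtain ⟨y, hy, hy0, hlt⟩ := hC
    have hxm := hβSmem y hy
    have hf0 : f (βS y) y = 0 := by
      rcases hf01 (βS y) hxm y hy with h | h
      · exact h
      · exact absurd ((heff (βS y) hxm y hy).mp h) (not_le.mpr hlt)
    have hpb : pB (βS y) y = 0 := by
      have h1 := hIRB (βS y) hxm y hy
      rw [hf0] at h1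
      have h2 := hpBnn (βS y) hxm y hy
      linarith
    have hps : 0 < pS (βS y) y := lt_of_lt_of_le hy0 (hStepB y hy)
    exact ⟨βS y, hxm, y, hy, hpb, hps, by rw [hpb]; simpa using hps⟩
  · push_neg at hC
    -- so βS y ≥ y for all y > 0; in fact f (βS u) u = 1 for all u
    have hG1 : ∀ u ∈ Set.Icc (0:ℝ) 1, f (βS u) u = 1 := by
      intro u hu
      apply (heff (βS u) (hβSmem u hu) u hu).mpr
      rcases eq_or_lt_of_le hu.1 with h | h
      · simpa [← h] using (hβSmem 0 h01).1
      · exact hC u hu h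
    have hpS1 : (1:ℝ) ≤ pS (βS 0) 0 := by
      have h := hpayS 0 h01
      have hint : (∫ u in (0:ℝ)..1, f (βS u) u) = 1 := by
        have hcong : Set.EqOn (fun u => f (βS u) u) (fun _ => (1:ℝ)) (Set.uIcc (0:ℝ) 1) := by
          intro u hu
          rw [Set.uIcc_of_le (by norm_num : (0:ℝ) ≤ 1)] at hu
          exact hG1 u hu
        rw [intervalIntegral.integral_congr hcong, intervalIntegral.integral_const]
        simp
      rw [hint] at h
      linarith
    set c := βS 0 with hc
    have hcm : c ∈ Set.Icc (0:ℝ) 1 := hβSmem 0 h01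
    set d := βB c with hd
    have hdm : d ∈ Set.Icc (0:ℝ) 1 := hβBmem c hcm
    have hpbcd : pB c d = 0 := hpB0 c hcm
    rcases eq_or_lt_of_le hdm.1 with h0 | h0
    · -- d = 0 : witness (c, 0), pS ≥ 1
      have hps : 0 < pS c 0 := lt_of_lt_of_le one_pos hpS1
      have hpb : pB c 0 = 0 := by rw [← h0] at hpbcd; exact hpbcd
      exact ⟨c, hcm, 0, h01, hpb, hps, by rw [hpb]; simpa using hps⟩
    · -- d > 0 : witness (c, d), pS ≥ d by seller IR since trade happens
      have hfcd : f c d = 1 := hF1 c hcm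
      have hps : 0 < pS c d := by
        have := hIRS c hcm d hdm
        rw [hfcd] at this
        linarith
      exact ⟨c, hcm, d, hdm, hpbcd, hps, by rw [hpbcd]; simpa using hps⟩
end

section
/- There exists an efficient, IR, WBB, WNOM bilateral trade mechanism: on D_B = [0,1] and D_S = {0,1}, the first-price mechanism M defined by f(x,y) = 1 if and only if x ≥ y, p_B(x,y) = x·f(x,y), and p_S(x,y) = y·f(x,y) is efficient, individually rational, weakly budget-balanced, and WNOM for both the buyer and the seller. -/
/-- There exists an efficient, IR, WBB, WNOM bilateral trade
mechanism: on `D_B = [0,1]` and `D_S = {0,1}`, the first-price mechanism with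
`f(x,y) = 1 ↔ x ≥ y`, `p_B(x,y) = x·f(x,y)` and `p_S(x,y) = y·f(x,y)` is efficient,
individually rational, weakly budget-balanced, and WNOM for both agents
(worst cases taken as infima over the opponent's domain). -/
theorem exists_efficient_ir_wbb_wnom_bilateral_trade :
    ∃ f pB pS : ℝ → ℝ → ℝ,
      (∀ x y : ℝ, f x y = if y ≤ x then 1 else 0) ∧
      (∀ x y : ℝ, pB x y = x * f x y) ∧
      (∀ x y : ℝ, pS x y = y * f x y) ∧
      -- efficiency
      (∀ x ∈ Set.Icc (0:ℝ) 1, ∀ y ∈ ({0, 1} : Set ℝ), (f x y = 1 ↔ y ≤ x)) ∧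
      -- individual rationality
      (∀ v ∈ Set.Icc (0:ℝ) 1, ∀ y ∈ ({0, 1} : Set ℝ), 0 ≤ v * f v y - pB v y) ∧
      (∀ x ∈ Set.Icc (0:ℝ) 1, ∀ u ∈ ({0, 1} : Set ℝ), 0 ≤ pS x u - u * f x u) ∧
      -- weak budget balance
      (∀ x ∈ Set.Icc (0:ℝ) 1, ∀ y ∈ ({0, 1} : Set ℝ), pS x y ≤ pB x y) ∧
      -- WNOM for the buyer
      (∀ v ∈ Set.Icc (0:ℝ) 1, ∀ x ∈ Set.Icc (0:ℝ) 1,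
        sInf ((fun y => v * f x y - pB x y) '' ({0, 1} : Set ℝ)) ≤
          sInf ((fun y => v * f v y - pB v y) '' ({0, 1} : Set ℝ))) ∧
      -- WNOM for the seller
      (∀ u ∈ ({0, 1} : Set ℝ), ∀ y ∈ ({0, 1} : Set ℝ),
        sInf ((fun x => pS x y - u * f x y) '' Set.Icc (0:ℝ) 1) ≤
          sInf ((fun x => pS x u - u * f x u) '' Set.Icc (0:ℝ) 1)) := by
  refine ⟨fun x y => if y ≤ x then 1 else 0,
    fun x y => x * (if y ≤ x then 1 else 0),
    fun x y => y * (if y ≤ x then 1 else 0),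
    fun x y => rfl, fun x y => rfl, fun x y => rfl, ?_, ?_, ?_, ?_, ?_, ?_⟩
  · intro x hx y hy
    beta_reduce
    split_ifs with h <;> simp [h]
  · intro v hv y hy; simp
  · intro x hx u hu; simp
  · intro x hx y hy
    beta_reduce
    split_ifs with h
    · simpa using h
    · simp
  · -- WNOM buyer
    intro v hv x hx
    beta_reduce
    have hR : ((fun y => v * (if y ≤ v then (1:ℝ) else 0) - v * (if y ≤ v then (1:ℝ) else 0))
        '' ({0, 1} : Set ℝ)) = {0} := by
      rw [show (fun y => v * (if y ≤ v then (1:ℝ) else 0) - v * (if y ≤ v then (1:ℝ) else 0))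
        = fun _ => (0:ℝ) from by funext y; ring]
      exact Set.Nonempty.image_const ⟨0, by simp⟩ 0
    rw [hR, csInf_singleton]
    have bdd : BddBelow ((fun y => v * (if y ≤ x then (1:ℝ) else 0)
        - x * (if y ≤ x then (1:ℝ) else 0)) '' ({0, 1} : Set ℝ)) := by
      refine ⟨-1, ?_⟩
      rintro z ⟨y, hy, rfl⟩
      dsimp only
      split_ifs with h
      · nlinarith [hv.1, hx.2]
      · norm_num
    by_cases hx1 : (1:ℝ) ≤ x
    · refine le_trans (csInf_le bdd ⟨0, by simp, rfl⟩) ?_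
      simp [hx.1]
      linarith [hv.2]
    · refine le_trans (csInf_le bdd ⟨1, by simp, rfl⟩) ?_
      simp [hx1]
  · -- WNOM seller
    intro u hu y hy
    beta_reduce
    have hR : ((fun x => u * (if u ≤ x then (1:ℝ) else 0) - u * (if u ≤ x then (1:ℝ) else 0))
        '' Set.Icc (0:ℝ) 1) = {0} := by
      rw [show (fun x => u * (if u ≤ x then (1:ℝ) else 0) - u * (if u ≤ x then (1:ℝ) else 0))
        = fun _ => (0:ℝ) from by funext x; ring]
      exact Set.Nonempty.image_const ⟨0, by norm_num⟩ 0
    rw [hR, csInf_singleton]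
    simp only [Set.mem_insert_iff, Set.mem_singleton_iff] at hu hy
    have bdd : BddBelow ((fun x => y * (if y ≤ x then (1:ℝ) else 0)
        - u * (if y ≤ x then (1:ℝ) else 0)) '' Set.Icc (0:ℝ) 1) := by
      refine ⟨-1, ?_⟩
      rintro z ⟨x, hxI, rfl⟩
      dsimp only
      split_ifs with h <;> rcases hu with rfl | rfl <;> rcases hy with rfl | rfl <;> norm_num
    refine le_trans (csInf_le bdd ⟨0, by norm_num, rfl⟩) ?_
    rcases hu with rfl | rfl <;> rcases hy with rfl | rfl <;> norm_num
end

section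
/- For every α ≥ 1, there is no bilateral trade mechanism on D_B = [0,1] and D_S = {0,1} that is simultaneously efficient, IR, BNOM, and α-WBB. -/
private lemma sSup_image_pair01 (g : ℝ → ℝ) :
    sSup (g '' ({0, 1} : Set ℝ)) = g 0 ⊔ g 1 := by
  rw [Set.image_insert_eq, Set.image_singleton, csSup_pair]

/-- For every `α ≥ 1`, there is no bilateral trade mechanism on
`D_B = [0,1]`, `D_S = {0,1}` that is simultaneously efficient, individually rational,
BNOM (best cases taken as suprema over the opponent's domain), and `α`-WBB. -/
theorem no_efficient_ir_bnom_alpha_wbb_bilateral_trade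
    (α : ℝ) (hα : 1 ≤ α) :
    ¬ ∃ f pB pS : ℝ → ℝ → ℝ,
      -- the allocation is 0/1-valued and payments are nonnegative
      (∀ x ∈ Set.Icc (0:ℝ) 1, ∀ y ∈ ({0, 1} : Set ℝ), f x y = 0 ∨ f x y = 1) ∧
      (∀ x ∈ Set.Icc (0:ℝ) 1, ∀ y ∈ ({0, 1} : Set ℝ), 0 ≤ pB x y ∧ 0 ≤ pS x y) ∧
      -- efficiency
      (∀ x ∈ Set.Icc (0:ℝ) 1, ∀ y ∈ ({0, 1} : Set ℝ), (f x y = 1 ↔ y ≤ x)) ∧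
      -- individual rationality
      (∀ v ∈ Set.Icc (0:ℝ) 1, ∀ y ∈ ({0, 1} : Set ℝ), 0 ≤ v * f v y - pB v y) ∧
      (∀ x ∈ Set.Icc (0:ℝ) 1, ∀ u ∈ ({0, 1} : Set ℝ), 0 ≤ pS x u - u * f x u) ∧
      -- BNOM for the buyer
      (∀ v ∈ Set.Icc (0:ℝ) 1, ∀ x ∈ Set.Icc (0:ℝ) 1,
        sSup ((fun y => v * f x y - pB x y) '' ({0, 1} : Set ℝ)) ≤
          sSup ((fun y => v * f v y - pB v y) '' ({0, 1} : Set ℝ))) ∧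
      -- BNOM for the seller
      (∀ u ∈ ({0, 1} : Set ℝ), ∀ y ∈ ({0, 1} : Set ℝ),
        sSup ((fun x => pS x y - u * f x y) '' Set.Icc (0:ℝ) 1) ≤
          sSup ((fun x => pS x u - u * f x u) '' Set.Icc (0:ℝ) 1)) ∧
      -- α-weak budget balance
      (∀ x ∈ Set.Icc (0:ℝ) 1, ∀ y ∈ ({0, 1} : Set ℝ), pS x y ≤ α * pB x y) := by
  rintro ⟨f, pB, pS, h01, hpos, heff, hirB, hirS, hbnomB, hbnomS, hwbb⟩
  have h0S : (0:ℝ) ∈ ({0, 1} : Set ℝ) := Or.inl rfl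
  have h1S : (1:ℝ) ∈ ({0, 1} : Set ℝ) := Or.inr rfl
  have h1I : (1:ℝ) ∈ Set.Icc (0:ℝ) 1 := ⟨zero_le_one, le_refl 1⟩
  -- allocation facts
  have hf0 : ∀ x ∈ Set.Icc (0:ℝ) 1, f x 0 = 1 := fun x hx =>
    (heff x hx 0 h0S).mpr hx.1
  have hf1lt : ∀ x ∈ Set.Icc (0:ℝ) 1, x < 1 → f x 1 = 0 := by
    intro x hx hxlt
    rcases h01 x hx 1 h1S with h | h
    · exact h
    · exact absurd ((heff x hx 1 h1S).mp h) (not_le.mpr hxlt)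
  have hf11 : f 1 1 = 1 := (heff 1 h1I 1 h1S).mpr le_rfl
  -- pB (x,1) = 0 for x < 1
  have hpB1 : ∀ x ∈ Set.Icc (0:ℝ) 1, x < 1 → pB x 1 = 0 := by
    intro x hx hxlt
    have h := hirB x hx 1 h1S
    rw [hf1lt x hx hxlt] at h
    have := (hpos x hx 1 h1S).1
    linarith
  -- pB (v,0) ≤ v
  have hpB0le : ∀ v ∈ Set.Icc (0:ℝ) 1, pB v 0 ≤ v := by
    intro v hv
    have h := hirB v hv 0 h0S
    rw [hf0 v hv] at h
    linarith
  -- pB (x,0) = 0 for x < 1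
  have hpB0 : ∀ x ∈ Set.Icc (0:ℝ) 1, x < 1 → pB x 0 = 0 := by
    intro x hx hxlt
    by_contra hne
    have hpos' : 0 < pB x 0 := lt_of_le_of_ne (hpos x hx 0 h0S).1 (Ne.symm hne)
    have hx0 : 0 < x := by
      rcases lt_or_eq_of_le hx.1 with h | h
      · exact h
      · subst h
        exact absurd (hpB0le 0 hx) (by linarith)
    set v : ℝ := min x (pB x 0) / 2 with hv_def
    have hv0 : 0 < v := by positivity
    have hvx : v < x := by
      have : min x (pB x 0) ≤ x := min_le_left _ _
      simp only [hv_def]; linarith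
    have hvp : v < pB x 0 := by
      have : min x (pB x 0) ≤ pB x 0 := min_le_right _ _
      simp only [hv_def]; linarith
    have hvI : v ∈ Set.Icc (0:ℝ) 1 := ⟨le_of_lt hv0, le_of_lt (lt_of_lt_of_le hvx hx.2)⟩
    have hB := hbnomB x hx v hvI
    rw [sSup_image_pair01, sSup_image_pair01] at hB
    rw [hf0 v hvI, hf0 x hx, hf1lt x hx hxlt, hpB1 x hx hxlt] at hB
    -- hB : (x*1 - pB v 0) ⊔ (x * f v 1 - pB v 1) ≤ (x*1 - pB x 0) ⊔ (x*0 - 0)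
    have hle : x * 1 - pB v 0 ≤ (x * 1 - pB x 0) ⊔ (x * 0 - 0) :=
      le_trans le_sup_left hB
    have hpv : pB v 0 ≤ v := hpB0le v hvI
    rcases le_sup_iff.mp hle with h | h
    · linarith
    · linarith
  -- pS (x,0) = 0 and pS (x,1) = 0 for x < 1
  have hpS0 : ∀ x ∈ Set.Icc (0:ℝ) 1, x < 1 → pS x 0 = 0 := by
    intro x hx hxlt
    have h := hwbb x hx 0 h0S
    rw [hpB0 x hx hxlt] at h
    have := (hpos x hx 0 h0S).2
    linarith
  have hpS1 : ∀ x ∈ Set.Icc (0:ℝ) 1, x < 1 → pS x 1 = 0 := by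
    intro x hx hxlt
    have h := hwbb x hx 1 h1S
    rw [hpB1 x hx hxlt] at h
    have := (hpos x hx 1 h1S).2
    linarith
  -- pS (1,1) ≥ 1
  have hpS11 : 1 ≤ pS 1 1 := by
    have h := hirS 1 h1I 1 h1S
    rw [hf11] at h
    linarith
  -- pB (x,1) ≤ 1 for all x, hence pS (x,1) ≤ α
  have hpSbd : ∀ x ∈ Set.Icc (0:ℝ) 1, pS x 1 ≤ α := by
    intro x hx
    have hb := hirB x hx 1 h1S
    have hwb := hwbb x hx 1 h1S
    have hf : f x 1 = 0 ∨ f x 1 = 1 := h01 x hx 1 h1S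
    have hpB : pB x 1 ≤ 1 := by
      rcases hf with h | h
      · rw [h] at hb; nlinarith [hx.2]
      · rw [h] at hb; nlinarith [hx.2]
    nlinarith
  -- seller BNOM with u = 0, y = 1 : pS 1 1 ≤ pS 1 0
  have hkey : pS 1 1 ≤ pS 1 0 := by
    have hS := hbnomS 0 h0S 1 h1S
    have hmem : pS 1 1 - 0 * f 1 1 ∈
        (fun x => pS x 1 - 0 * f x 1) '' Set.Icc (0:ℝ) 1 := ⟨1, h1I, rfl⟩
    have hbd : BddAbove ((fun x => pS x 1 - 0 * f x 1) '' Set.Icc (0:ℝ) 1) := by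
      refine ⟨α, ?_⟩
      rintro a ⟨x, hx, rfl⟩
      have := hpSbd x hx
      simp only [zero_mul, sub_zero]
      linarith
    have h1 : pS 1 1 - 0 * f 1 1 ≤
        sSup ((fun x => pS x 1 - 0 * f x 1) '' Set.Icc (0:ℝ) 1) := le_csSup hbd hmem
    have h2 : sSup ((fun x => pS x 0 - 0 * f x 0) '' Set.Icc (0:ℝ) 1) ≤ pS 1 0 := by
      apply csSup_le (Set.Nonempty.image _ ⟨1, h1I⟩)
      rintro a ⟨x, hx, rfl⟩
      rcases lt_or_eq_of_le hx.2 with h | h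
      · have := hpS0 x hx h
        have := (hpos 1 h1I 0 h0S).2
        simp only [zero_mul, sub_zero]
        linarith
      · subst h; simp
    have := le_trans (le_trans h1 hS) h2
    linarith
  -- hence pS 1 0 ≥ 1 and pB 1 0 > 0
  have hpS10 : 1 ≤ pS 1 0 := le_trans hpS11 hkey
  have hpB10 : 0 < pB 1 0 := by
    have h := hwbb 1 h1I 0 h0S
    nlinarith
  -- buyer BNOM with v = 1, x = 1/2
  have hhI : (1/2 : ℝ) ∈ Set.Icc (0:ℝ) 1 := ⟨by norm_num, by norm_num⟩
  have hhlt : (1/2 : ℝ) < 1 := by norm_num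
  have hB := hbnomB 1 h1I (1/2) hhI
  rw [sSup_image_pair01, sSup_image_pair01] at hB
  rw [hf0 (1/2) hhI, hf1lt (1/2) hhI hhlt, hpB1 (1/2) hhI hhlt, hpB0 (1/2) hhI hhlt,
    hf0 1 h1I, hf11] at hB
  -- hB : (1*1 - 0) ⊔ (1*0 - 0) ≤ (1*1 - pB 1 0) ⊔ (1*1 - pB 1 1)
  have hle : (1:ℝ) * 1 - 0 ≤ (1 * 1 - pB 1 0) ⊔ (1 * 1 - pB 1 1) :=
    le_trans le_sup_left hB
  have hpB11 : pB 1 1 = 0 := by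
    have hnn := (hpos 1 h1I 1 h1S).1
    rcases le_sup_iff.mp hle with h | h
    · linarith
    · linarith
  have h := hwbb 1 h1I 1 h1S
  rw [hpB11] at h
  nlinarith
end

section
/- Conversely, if a deterministic bilateral trade mechanism M on finite domains D_B, D_S ⊂ ℝ_{≥0} admits thresholds p_B^min ≤ p_B^max and p_S^min ≤ p_S^max satisfying conditions (1)–(5) — namely (1) whenever f(x,y) = 0 both payments are zero, and whenever f(x,y) = 1 one has 0 ≤ p_S(x,y) ≤ p_B(x,y) ≤ x and p_S(x,y) ≥ y; (2) every x ∈ D_B with x < p_B^min lies in M_0^B, every x > p_B^max lies in M_1^B, every x with p_B^min < x < p_B^max lies in M_{01}^B, and if p_B^min ∈ D_B then p_B^min ∈ M_0^B ∪ M_{01}^B while if p_B^max ∈ D_B then p_B^max ∈ M_1^B ∪ M_{01}^B; (3) for every x ∈ M_{01}^B ∪ M_1^B, p_B(x,y) ≥ p_B^min for every y with f(x,y) = 1 and there exists y with f(x,y) = 1 and p_B(x,y) = p_B^min, and for every x ∈ M_1^B, p_B(x,y) ≤ p_B^max for all y and there exists y with f(x,y) = 1 and p_B(x,y) = p_B^max;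 (4) every y ∈ D_S with y > p_S^max lies in M_0^S, every y < p_S^min lies in M_1^S, every y with p_S^min < y < p_S^max lies in M_{01}^S, and if p_S^min ∈ D_S then p_S^min ∈ M_1^S ∪ M_{01}^S while if p_S^max ∈ D_S then p_S^max ∈ M_{01}^S ∪ M_1^S; (5) for every y ∈ M_{01}^S ∪ M_1^S, p_S(x,y) ≤ p_S^max for every x with f(x,y) = 1 and there exists x with f(x,y) = 1 and p_S(x,y) = p_S^max, and for every y ∈ M_1^S, p_S(x,y) ≥ p_S^min for all x and there exists x with f(x,y) = 1 and p_S(x,y) = p_S^min — then M is IR, WBB, and NOM. -/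
/-- Buyer bids for which trade never occurs. -/
def M0B (DB DS : Finset ℝ) (f : ℝ → ℝ → ℝ) : Set ℝ :=
  {x | x ∈ DB ∧ ∀ y ∈ DS, f x y = 0}

/-- Buyer bids for which trade always occurs. -/
def M1B (DB DS : Finset ℝ) (f : ℝ → ℝ → ℝ) : Set ℝ :=
  {x | x ∈ DB ∧ ∀ y ∈ DS, f x y = 1}

/-- Buyer bids for which trade depends on the seller's bid. -/
def M01B (DB DS : Finset ℝ) (f : ℝ → ℝ → ℝ) : Set ℝ :=
  {x | x ∈ DB ∧ x ∉ M0B DB DS f ∧ x ∉ M1B DB DS f}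

/-- Seller bids for which trade never occurs. -/
def M0S (DB DS : Finset ℝ) (f : ℝ → ℝ → ℝ) : Set ℝ :=
  {y | y ∈ DS ∧ ∀ x ∈ DB, f x y = 0}

/-- Seller bids for which trade always occurs. -/
def M1S (DB DS : Finset ℝ) (f : ℝ → ℝ → ℝ) : Set ℝ :=
  {y | y ∈ DS ∧ ∀ x ∈ DB, f x y = 1}

/-- Seller bids for which trade depends on the buyer's bid. -/
def M01S (DB DS : Finset ℝ) (f : ℝ → ℝ → ℝ) : Set ℝ :=
  {y | y ∈ DS ∧ y ∉ M0S DB DS f ∧ y ∉ M1S DB DS f}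

/-- Conversely, if a deterministic bilateral trade mechanism on finite
domains `DB, DS ⊂ ℝ≥0` admits thresholds `p_B^min ≤ p_B^max`, `p_S^min ≤ p_S^max`
satisfying the structural conditions (1)–(5), then it is IR, WBB, and NOM. -/
theorem thresholds_imply_ir_wbb_nom
    (DB DS : Finset ℝ) (hDB : DB.Nonempty) (hDS : DS.Nonempty)
    (hDBnn : ∀ x ∈ DB, (0:ℝ) ≤ x) (hDSnn : ∀ y ∈ DS, (0:ℝ) ≤ y)
    (f pB pS : ℝ → ℝ → ℝ)
    (hf01 : ∀ x ∈ DB, ∀ y ∈ DS, f x y = 0 ∨ f x y = 1)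
    (pBmin pBmax pSmin pSmax : ℝ)
    (hBminmax : pBmin ≤ pBmax) (hSminmax : pSmin ≤ pSmax)
    -- (1)
    (h1 : ∀ x ∈ DB, ∀ y ∈ DS,
      (f x y = 0 → pB x y = 0 ∧ pS x y = 0) ∧
      (f x y = 1 → 0 ≤ pS x y ∧ pS x y ≤ pB x y ∧ pB x y ≤ x ∧ y ≤ pS x y))
    -- (2)
    (h2 : (∀ x ∈ DB, (x < pBmin → x ∈ M0B DB DS f) ∧ (pBmax < x → x ∈ M1B DB DS f) ∧
        (pBmin < x → x < pBmax → x ∈ M01B DB DS f)) ∧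
      (pBmin ∈ DB → pBmin ∈ M0B DB DS f ∪ M01B DB DS f) ∧
      (pBmax ∈ DB → pBmax ∈ M1B DB DS f ∪ M01B DB DS f))
    -- (3)
    (h3 : (∀ x ∈ M01B DB DS f ∪ M1B DB DS f,
        (∀ y ∈ DS, f x y = 1 → pBmin ≤ pB x y) ∧
        (∃ y ∈ DS, f x y = 1 ∧ pB x y = pBmin)) ∧
      (∀ x ∈ M1B DB DS f,
        (∀ y ∈ DS, pB x y ≤ pBmax) ∧
        (∃ y ∈ DS, f x y = 1 ∧ pB x y = pBmax)))
    -- (4)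
    (h4 : (∀ y ∈ DS, (pSmax < y → y ∈ M0S DB DS f) ∧ (y < pSmin → y ∈ M1S DB DS f) ∧
        (pSmin < y → y < pSmax → y ∈ M01S DB DS f)) ∧
      (pSmin ∈ DS → pSmin ∈ M1S DB DS f ∪ M01S DB DS f) ∧
      (pSmax ∈ DS → pSmax ∈ M01S DB DS f ∪ M1S DB DS f))
    -- (5)
    (h5 : (∀ y ∈ M01S DB DS f ∪ M1S DB DS f,
        (∀ x ∈ DB, f x y = 1 → pS x y ≤ pSmax) ∧
        (∃ x ∈ DB, f x y = 1 ∧ pS x y = pSmax)) ∧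
      (∀ y ∈ M1S DB DS f,
        (∀ x ∈ DB, pSmin ≤ pS x y) ∧
        (∃ x ∈ DB, f x y = 1 ∧ pS x y = pSmin))) :
    -- individual rationality
    (∀ v ∈ DB, ∀ y ∈ DS, 0 ≤ v * f v y - pB v y) ∧
    (∀ x ∈ DB, ∀ u ∈ DS, 0 ≤ pS x u - u * f x u) ∧
    -- weak budget balance
    (∀ x ∈ DB, ∀ y ∈ DS, pS x y ≤ pB x y) ∧
    -- NOM for the buyer
    (∀ v ∈ DB, ∀ x ∈ DB,
      (sSup ((fun y => v * f x y - pB x y) '' (DS : Set ℝ)) ≤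
        sSup ((fun y => v * f v y - pB v y) '' (DS : Set ℝ))) ∧
      (sInf ((fun y => v * f x y - pB x y) '' (DS : Set ℝ)) ≤
        sInf ((fun y => v * f v y - pB v y) '' (DS : Set ℝ)))) ∧
    -- NOM for the seller
    (∀ u ∈ DS, ∀ y ∈ DS,
      (sSup ((fun x => pS x y - u * f x y) '' (DB : Set ℝ)) ≤
        sSup ((fun x => pS x u - u * f x u) '' (DB : Set ℝ))) ∧
      (sInf ((fun x => pS x y - u * f x y) '' (DB : Set ℝ)) ≤
        sInf ((fun x => pS x u - u * f x u) '' (DB : Set ℝ)))) := by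

  classical
  obtain ⟨h2a, h2b, h2c⟩ := h2
  obtain ⟨h3a, h3b⟩ := h3
  obtain ⟨h4a, h4b, h4c⟩ := h4
  obtain ⟨h5a, h5b⟩ := h5
  obtain ⟨y0, hy0⟩ := hDS
  obtain ⟨x0, hx0⟩ := hDB
  -- definitional unfolding helpers
  have eM0B : ∀ x, x ∈ M0B DB DS f ↔ (x ∈ DB ∧ ∀ y ∈ DS, f x y = 0) := fun x => Iff.rfl
  have eM1B : ∀ x, x ∈ M1B DB DS f ↔ (x ∈ DB ∧ ∀ y ∈ DS, f x y = 1) := fun x => Iff.rfl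
  have eM01B : ∀ x, x ∈ M01B DB DS f ↔
      (x ∈ DB ∧ x ∉ M0B DB DS f ∧ x ∉ M1B DB DS f) := fun x => Iff.rfl
  have eM0S : ∀ y, y ∈ M0S DB DS f ↔ (y ∈ DS ∧ ∀ x ∈ DB, f x y = 0) := fun y => Iff.rfl
  have eM1S : ∀ y, y ∈ M1S DB DS f ↔ (y ∈ DS ∧ ∀ x ∈ DB, f x y = 1) := fun y => Iff.rfl
  have eM01S : ∀ y, y ∈ M01S DB DS f ↔
      (y ∈ DS ∧ y ∉ M0S DB DS f ∧ y ∉ M1S DB DS f) := fun y => Iff.rfl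
  -- disjointness of M0 and M1
  have hdisjB : ∀ x, x ∈ M0B DB DS f → x ∉ M1B DB DS f := by
    intro x h0 h1'
    have e0 := ((eM0B x).mp h0).2 y0 hy0
    have e1 := ((eM1B x).mp h1').2 y0 hy0
    rw [e0] at e1; norm_num at e1
  have hdisjS : ∀ y, y ∈ M0S DB DS f → y ∉ M1S DB DS f := by
    intro y h0 h1'
    have e0 := ((eM0S y).mp h0).2 x0 hx0
    have e1 := ((eM1S y).mp h1').2 x0 hx0
    rw [e0] at e1; norm_num at e1
  -- f = 1 implies membership in M01 ∪ M1
  have hf1B : ∀ x ∈ DB, ∀ y ∈ DS, f x y = 1 → x ∈ M01B DB DS f ∪ M1B DB DS f := by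
    intro x hx y hy hf1
    by_cases hx1 : x ∈ M1B DB DS f
    · exact Or.inr hx1
    · refine Or.inl ((eM01B x).mpr ⟨hx, ?_, hx1⟩)
      intro h0
      have := ((eM0B x).mp h0).2 y hy
      rw [this] at hf1; norm_num at hf1
  have hf1S : ∀ x ∈ DB, ∀ y ∈ DS, f x y = 1 → y ∈ M01S DB DS f ∪ M1S DB DS f := by
    intro x hx y hy hf1
    by_cases hy1 : y ∈ M1S DB DS f
    · exact Or.inr hy1
    · refine Or.inl ((eM01S y).mpr ⟨hy, ?_, hy1⟩)
      intro h0
      have := ((eM0S y).mp h0).2 x hx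
      rw [this] at hf1; norm_num at hf1
  have hmemB : ∀ x, x ∈ M01B DB DS f ∪ M1B DB DS f → x ∈ DB := by
    rintro x (h | h)
    exacts [((eM01B x).mp h).1, ((eM1B x).mp h).1]
  have hmemS : ∀ y, y ∈ M01S DB DS f ∪ M1S DB DS f → y ∈ DS := by
    rintro y (h | h)
    exacts [((eM01S y).mp h).1, ((eM1S y).mp h).1]
  -- threshold facts
  have hBf2 : ∀ x ∈ M01B DB DS f ∪ M1B DB DS f, pBmin ≤ x := by
    intro x hxU
    obtain ⟨y, hy, hf1, hpb⟩ := (h3a x hxU).2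
    have h := ((h1 x (hmemB x hxU) y hy).2 hf1).2.2.1
    rw [hpb] at h; exact h
  have hBf5 : ∀ x ∈ M1B DB DS f, pBmax ≤ x := by
    intro x hx1
    obtain ⟨y, hy, hf1, hpb⟩ := (h3b x hx1).2
    have h := ((h1 x ((eM1B x).mp hx1).1 y hy).2 hf1).2.2.1
    rw [hpb] at h; exact h
  have hSf2 : ∀ y ∈ M01S DB DS f ∪ M1S DB DS f, y ≤ pSmax := by
    intro y hyU
    obtain ⟨x, hx, hf1, hps⟩ := (h5a y hyU).2
    have h := ((h1 x hx y (hmemS y hyU)).2 hf1).2.2.2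
    rw [hps] at h; exact h
  have hSf5 : ∀ y ∈ M1S DB DS f, y ≤ pSmin := by
    intro y hy1
    obtain ⟨x, hx, hf1, hps⟩ := (h5b y hy1).2
    have h := ((h1 x hx y ((eM1S y).mp hy1).1).2 hf1).2.2.2
    rw [hps] at h; exact h
  have hBf3 : ∀ v ∈ DB, v ∈ M0B DB DS f → v ≤ pBmin := by
    intro v hv hv0
    by_contra hlt
    push_neg at hlt
    rcases lt_trichotomy v pBmax with h | h | h
    · exact (((eM01B v).mp ((h2a v hv).2.2 hlt h)).2.1 hv0).elim
    · subst h
      rcases h2c hv with hm | hm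
      · exact hdisjB v hv0 hm
      · exact ((eM01B v).mp hm).2.1 hv0
    · exact hdisjB v hv0 ((h2a v hv).2.1 h)
  have hBf4 : ∀ v ∈ DB, v ∉ M1B DB DS f → v ≤ pBmax := by
    intro v hv hv1
    by_contra hlt; push_neg at hlt
    exact hv1 ((h2a v hv).2.1 hlt)
  have hSf3 : ∀ u ∈ DS, u ∈ M0S DB DS f → pSmax ≤ u := by
    intro u hu hu0
    by_contra hlt
    push_neg at hlt
    rcases lt_trichotomy u pSmin with h | h | h
    · exact hdisjS u hu0 ((h4a u hu).2.1 h)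
    · subst h
      rcases h4b hu with hm | hm
      · exact hdisjS u hu0 hm
      · exact ((eM01S u).mp hm).2.1 hu0
    · exact ((eM01S u).mp ((h4a u hu).2.2 h hlt)).2.1 hu0
  have hSf4 : ∀ u ∈ DS, u ∉ M1S DB DS f → pSmin ≤ u := by
    intro u hu hu1
    by_contra hlt; push_neg at hlt
    exact hu1 ((h4a u hu).2.1 hlt)
  -- utility computations
  have hUB0 : ∀ v : ℝ, ∀ x ∈ DB, ∀ y ∈ DS, f x y = 0 → v * f x y - pB x y = 0 := by
    intro v x hx y hy h0
    have h := ((h1 x hx y hy).1 h0).1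
    rw [h0, h]; ring
  have hUB1 : ∀ v : ℝ, ∀ x ∈ DB, ∀ y ∈ DS, f x y = 1 →
      v * f x y - pB x y = v - pB x y := by
    intro v x hx y hy h0; rw [h0]; ring
  have hUS0 : ∀ u : ℝ, ∀ x ∈ DB, ∀ y ∈ DS, f x y = 0 → pS x y - u * f x y = 0 := by
    intro u x hx y hy h0
    have h := ((h1 x hx y hy).1 h0).2
    rw [h0, h]; ring
  have hUS1 : ∀ u : ℝ, ∀ x ∈ DB, ∀ y ∈ DS, f x y = 1 →
      pS x y - u * f x y = pS x y - u := by
    intro u x hx y hy h0; rw [h0]; ring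
  have hnotM1B : ∀ x ∈ DB, x ∉ M1B DB DS f → ∃ y ∈ DS, f x y = 0 := by
    intro x hx hx1
    by_contra h; push_neg at h
    exact hx1 ((eM1B x).mpr ⟨hx, fun y hy => (hf01 x hx y hy).resolve_left (h y hy)⟩)
  have hnotM1S : ∀ y ∈ DS, y ∉ M1S DB DS f → ∃ x ∈ DB, f x y = 0 := by
    intro y hy hy1
    by_contra h; push_neg at h
    exact hy1 ((eM1S y).mpr ⟨hy, fun x hx => (hf01 x hx y hy).resolve_left (h x hx)⟩)
  -- IR
  have hIRB : ∀ v ∈ DB, ∀ y ∈ DS, 0 ≤ v * f v y - pB v y := by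
    intro v hv y hy
    rcases hf01 v hv y hy with h0 | hf1
    · rw [hUB0 v v hv y hy h0]
    · rw [hUB1 v v hv y hy hf1]
      have h := ((h1 v hv y hy).2 hf1).2.2.1
      linarith
  have hIRS : ∀ x ∈ DB, ∀ u ∈ DS, 0 ≤ pS x u - u * f x u := by
    intro x hx u hu
    rcases hf01 x hx u hu with h0 | hf1
    · rw [hUS0 u x hx u hu h0]
    · rw [hUS1 u x hx u hu hf1]
      have h := ((h1 x hx u hu).2 hf1).2.2.2
      linarith
  have hWBB : ∀ x ∈ DB, ∀ y ∈ DS, pS x y ≤ pB x y := by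
    intro x hx y hy
    rcases hf01 x hx y hy with h0 | hf1
    · have h := (h1 x hx y hy).1 h0
      rw [h.1, h.2]
    · exact ((h1 x hx y hy).2 hf1).2.1
  refine ⟨hIRB, hIRS, hWBB, ?_, ?_⟩
  · -- NOM for the buyer
    intro v hv x hx
    have hne : ∀ t : ℝ, ((fun y => v * f t y - pB t y) '' (DS : Set ℝ)).Nonempty :=
      fun t => ⟨_, Set.mem_image_of_mem _ (Finset.mem_coe.mpr hy0)⟩
    have hbdd : ∀ t : ℝ, BddAbove ((fun y => v * f t y - pB t y) '' (DS : Set ℝ)) :=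
      fun t => (DS.finite_toSet.image _).bddAbove
    have hbddb : ∀ t : ℝ, BddBelow ((fun y => v * f t y - pB t y) '' (DS : Set ℝ)) :=
      fun t => (DS.finite_toSet.image _).bddBelow
    constructor
    · -- sSup part
      have hub : sSup ((fun y => v * f x y - pB x y) '' (DS : Set ℝ)) ≤
          max 0 (v - pBmin) := by
        apply csSup_le (hne x)
        rintro _ ⟨y, hy, rfl⟩
        have hyD : y ∈ DS := hy
        rcases hf01 x hx y hyD with h0 | hf1
        · show v * f x y - pB x y ≤ max 0 (v - pBmin)
          rw [hUB0 v x hx y hyD h0]; exact le_max_left _ _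
        · show v * f x y - pB x y ≤ max 0 (v - pBmin)
          rw [hUB1 v x hx y hyD hf1]
          have hmem := hf1B x hx y hyD hf1
          have h := (h3a x hmem).1 y hyD hf1
          have h2' := le_max_right (0 : ℝ) (v - pBmin)
          linarith
      refine hub.trans ?_
      by_cases hv0 : v ∈ M0B DB DS f
      · have hvle : v ≤ pBmin := hBf3 v hv hv0
        have hmax : max 0 (v - pBmin) = 0 := max_eq_left (by linarith)
        rw [hmax]
        refine le_csSup (hbdd v) ?_
        exact ⟨y0, Finset.mem_coe.mpr hy0, hUB0 v v hv y0 hy0 (((eM0B v).mp hv0).2 y0 hy0)⟩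
      · have hvU : v ∈ M01B DB DS f ∪ M1B DB DS f := by
          by_cases hv1 : v ∈ M1B DB DS f
          · exact Or.inr hv1
          · exact Or.inl ((eM01B v).mpr ⟨hv, hv0, hv1⟩)
        obtain ⟨y, hy, hf1, hpb⟩ := (h3a v hvU).2
        have hge : pBmin ≤ v := hBf2 v hvU
        have hmax : max 0 (v - pBmin) = v - pBmin := max_eq_right (by linarith)
        rw [hmax]
        refine le_csSup (hbdd v) ?_
        refine ⟨y, Finset.mem_coe.mpr hy, ?_⟩
        show v * f v y - pB v y = v - pBmin
        rw [hUB1 v v hv y hy hf1, hpb]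
    · -- sInf part
      by_cases hv1 : v ∈ M1B DB DS f
      · have htruth : v - pBmax ≤ sInf ((fun y => v * f v y - pB v y) '' (DS : Set ℝ)) := by
          apply le_csInf (hne v)
          rintro _ ⟨y, hy, rfl⟩
          have hyD : y ∈ DS := hy
          have hf1 : f v y = 1 := ((eM1B v).mp hv1).2 y hyD
          show v - pBmax ≤ v * f v y - pB v y
          rw [hUB1 v v hv y hyD hf1]
          have h := (h3b v hv1).1 y hyD
          linarith
        refine le_trans ?_ htruth
        by_cases hx1 : x ∈ M1B DB DS f
        · obtain ⟨y, hy, hf1, hpb⟩ := (h3b x hx1).2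
          refine csInf_le (hbddb x) ?_
          refine ⟨y, Finset.mem_coe.mpr hy, ?_⟩
          show v * f x y - pB x y = v - pBmax
          rw [hUB1 v x hx y hy hf1, hpb]
        · obtain ⟨y, hy, h0⟩ := hnotM1B x hx hx1
          have h00 := csInf_le (hbddb x)
            (⟨y, Finset.mem_coe.mpr hy, hUB0 v x hx y hy h0⟩ :
              (0:ℝ) ∈ (fun y => v * f x y - pB x y) '' (DS : Set ℝ))
          have hvge : pBmax ≤ v := hBf5 v hv1
          linarith
      · have htruth : (0:ℝ) ≤ sInf ((fun y => v * f v y - pB v y) '' (DS : Set ℝ)) := by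
          apply le_csInf (hne v)
          rintro _ ⟨y, hy, rfl⟩
          exact hIRB v hv y hy
        refine le_trans ?_ htruth
        by_cases hx1 : x ∈ M1B DB DS f
        · obtain ⟨y, hy, hf1, hpb⟩ := (h3b x hx1).2
          have hm : (v - pBmax) ∈ (fun y => v * f x y - pB x y) '' (DS : Set ℝ) := by
            refine ⟨y, Finset.mem_coe.mpr hy, ?_⟩
            show v * f x y - pB x y = v - pBmax
            rw [hUB1 v x hx y hy hf1, hpb]
          have h := csInf_le (hbddb x) hm
          have hle : v ≤ pBmax := hBf4 v hv hv1
          linarith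
        · obtain ⟨y, hy, h0⟩ := hnotM1B x hx hx1
          exact csInf_le (hbddb x) ⟨y, Finset.mem_coe.mpr hy, hUB0 v x hx y hy h0⟩
  · -- NOM for the seller
    intro u hu y hy
    have hne : ∀ t : ℝ, ((fun x => pS x t - u * f x t) '' (DB : Set ℝ)).Nonempty :=
      fun t => ⟨_, Set.mem_image_of_mem _ (Finset.mem_coe.mpr hx0)⟩
    have hbdd : ∀ t : ℝ, BddAbove ((fun x => pS x t - u * f x t) '' (DB : Set ℝ)) :=
      fun t => (DB.finite_toSet.image _).bddAbove
    have hbddb : ∀ t : ℝ, BddBelow ((fun x => pS x t - u * f x t) '' (DB : Set ℝ)) :=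
      fun t => (DB.finite_toSet.image _).bddBelow
    constructor
    · -- sSup part
      have hub : sSup ((fun x => pS x y - u * f x y) '' (DB : Set ℝ)) ≤
          max 0 (pSmax - u) := by
        apply csSup_le (hne y)
        rintro _ ⟨x, hx, rfl⟩
        have hxD : x ∈ DB := hx
        rcases hf01 x hxD y hy with h0 | hf1
        · show pS x y - u * f x y ≤ max 0 (pSmax - u)
          rw [hUS0 u x hxD y hy h0]; exact le_max_left _ _
        · show pS x y - u * f x y ≤ max 0 (pSmax - u)
          rw [hUS1 u x hxD y hy hf1]
          have hmem := hf1S x hxD y hy hf1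
          have h := (h5a y hmem).1 x hxD hf1
          have h2' := le_max_right (0 : ℝ) (pSmax - u)
          linarith
      refine hub.trans ?_
      by_cases hu0 : u ∈ M0S DB DS f
      · have hule : pSmax ≤ u := hSf3 u hu hu0
        have hmax : max 0 (pSmax - u) = 0 := max_eq_left (by linarith)
        rw [hmax]
        refine le_csSup (hbdd u) ?_
        exact ⟨x0, Finset.mem_coe.mpr hx0, hUS0 u x0 hx0 u hu (((eM0S u).mp hu0).2 x0 hx0)⟩
      · have huU : u ∈ M01S DB DS f ∪ M1S DB DS f := by
          by_cases hu1 : u ∈ M1S DB DS f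
          · exact Or.inr hu1
          · exact Or.inl ((eM01S u).mpr ⟨hu, hu0, hu1⟩)
        obtain ⟨x, hx, hf1, hps⟩ := (h5a u huU).2
        have hge : u ≤ pSmax := hSf2 u huU
        have hmax : max 0 (pSmax - u) = pSmax - u := max_eq_right (by linarith)
        rw [hmax]
        refine le_csSup (hbdd u) ?_
        refine ⟨x, Finset.mem_coe.mpr hx, ?_⟩
        show pS x u - u * f x u = pSmax - u
        rw [hUS1 u x hx u hu hf1, hps]
    · -- sInf part
      by_cases hu1 : u ∈ M1S DB DS f
      · have htruth : pSmin - u ≤ sInf ((fun x => pS x u - u * f x u) '' (DB : Set ℝ)) := by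
          apply le_csInf (hne u)
          rintro _ ⟨x, hx, rfl⟩
          have hxD : x ∈ DB := hx
          have hf1 : f x u = 1 := ((eM1S u).mp hu1).2 x hxD
          show pSmin - u ≤ pS x u - u * f x u
          rw [hUS1 u x hxD u hu hf1]
          have h := (h5b u hu1).1 x hxD
          linarith
        refine le_trans ?_ htruth
        by_cases hy1 : y ∈ M1S DB DS f
        · obtain ⟨x, hx, hf1, hps⟩ := (h5b y hy1).2
          refine csInf_le (hbddb y) ?_
          refine ⟨x, Finset.mem_coe.mpr hx, ?_⟩
          show pS x y - u * f x y = pSmin - u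
          rw [hUS1 u x hx y hy hf1, hps]
        · obtain ⟨x, hx, h0⟩ := hnotM1S y hy hy1
          have h00 := csInf_le (hbddb y)
            (⟨x, Finset.mem_coe.mpr hx, hUS0 u x hx y hy h0⟩ :
              (0:ℝ) ∈ (fun x => pS x y - u * f x y) '' (DB : Set ℝ))
          have huge : u ≤ pSmin := hSf5 u hu1
          linarith
      · have htruth : (0:ℝ) ≤ sInf ((fun x => pS x u - u * f x u) '' (DB : Set ℝ)) := by
          apply le_csInf (hne u)
          rintro _ ⟨x, hx, rfl⟩
          exact hIRS x hx u hu
        refine le_trans ?_ htruth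
        by_cases hy1 : y ∈ M1S DB DS f
        · obtain ⟨x, hx, hf1, hps⟩ := (h5b y hy1).2
          have hm : (pSmin - u) ∈ (fun x => pS x y - u * f x y) '' (DB : Set ℝ) := by
            refine ⟨x, Finset.mem_coe.mpr hx, ?_⟩
            show pS x y - u * f x y = pSmin - u
            rw [hUS1 u x hx y hy hf1, hps]
          have h := csInf_le (hbddb y) hm
          have hle : pSmin ≤ u := hSf4 u hu hu1
          linarith
        · obtain ⟨x, hx, h0⟩ := hnotM1S y hy hy1
          exact csInf_le (hbddb y) ⟨x, Finset.mem_coe.mpr hx, hUS0 u x hx y hy h0⟩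
end
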